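/- arXiv:2604.06721 — 6 statements merged into one kernel-verified Lean document; each statement's English description precedes it below -/
import Mathlib

section
/- Let n=1 and s∈(0,1) with 2s<1, let K satisfy (K1) and (K2), let α ∈ (2s,1], and let u ∈ C^{1,α}(ℝ). Then for every x∈ℝ, the derivative of L_K u at x exists and equals L_K u′(x); that is, (L_K u)′(x) = L_K u′(x). -/
open MeasureTheory Filter Set Topology

/-- The principal value operator `L_K u (x)` (junk value if the limit does not exist). -/
noncomputable def LK (K u : ℝ → ℝ) (x : ℝ) : ℝ :=
  limUnder (nhdsWithin (0:ℝ) (Set.Ioi 0))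
    (fun ε : ℝ => ∫ y in {y : ℝ | ε < |y - x|}, (u y - u x) * K (x - y))

open Real

/-!
After the substitution `y = x - z`, `L_K v (x) = ∫ (v (x - z) - v x) K(z) dz`, and this
integral converges absolutely as soon as `v` is bounded and `γ`-Hölder with `γ > 2s`: the
integrand is at most `C min(|z|^γ, 1) |z|^(-1-2s)`, integrable near `0` because
`γ - 1 - 2s > -1` and near infinity because `-1 - 2s < -1`. For `u ∈ C^{1,α}` this applies to
`u` (with `γ = 1`) and to `u'` (with `γ = α`), and the `x`-derivative `(u' (x - z) - u' x) K(z)`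
of the integrand for `u` is dominated by the same bound uniformly in `x`, so one may
differentiate under the integral sign.
-/

theorem integrable_comp_abs_of_integrableOn_Ioi {E : Type*} [NormedAddCommGroup E] {f : ℝ → E}
    (hf : IntegrableOn f (Ioi 0)) : Integrable fun x => f |x| := by
  have hpos : IntegrableOn (fun x => f |x|) (Ioi 0) :=
    hf.congr_fun (fun x hx => by rw [abs_of_pos (mem_Ioi.mp hx)]) measurableSet_Ioi
  have hneg : IntegrableOn (fun x => f |x|) (Iic 0) := by
    have hneg_emb : MeasurableEmbedding (Neg.neg : ℝ → ℝ) :=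
      (Homeomorph.neg ℝ).measurableEmbedding
    rw [← Measure.map_neg_eq_self (volume : Measure ℝ), hneg_emb.integrableOn_map_iff]
    simp_rw [Function.comp_def, abs_neg, neg_preimage, neg_Iic, neg_zero]
    exact (integrableOn_Ici_iff_integrableOn_Ioi).mpr hpos
  rw [← integrableOn_univ, ← Iic_union_Ioi (a := (0 : ℝ))]
  exact hneg.union hpos

theorem integrableOn_Ioi_min_rpow_one_mul_rpow_neg {β p : ℝ} (hβ : p - 1 < β) (hp : 1 < p) :
    IntegrableOn (fun t : ℝ => min (t ^ β) 1 * t ^ (-p)) (Ioi 0) := by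
  have hmeas : AEStronglyMeasurable (fun t : ℝ => min (t ^ β) 1 * t ^ (-p)) :=
    (by fun_prop : Measurable fun t : ℝ => min (t ^ β) 1 * t ^ (-p)).aestronglyMeasurable
  have near_zero : IntegrableOn (fun t : ℝ => min (t ^ β) 1 * t ^ (-p)) (Ioo 0 1) := by
    refine ((intervalIntegral.integrableOn_Ioo_rpow_iff one_pos).mpr
      (by linarith : -1 < β - p)).mono' hmeas.restrict ?_
    filter_upwards [ae_restrict_mem measurableSet_Ioo] with t ht
    have ht : 0 < t := ht.1
    rw [norm_of_nonneg (by positivity), sub_eq_add_neg, rpow_add ht]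
    gcongr
    exact min_le_left _ _
  have near_infinity : IntegrableOn (fun t : ℝ => min (t ^ β) 1 * t ^ (-p)) (Ioi 1) := by
    refine (integrableOn_Ioi_rpow_of_lt (by linarith : -p < -1) one_pos).mono' hmeas.restrict ?_
    filter_upwards [ae_restrict_mem measurableSet_Ioi] with t ht
    have ht : (0 : ℝ) < t := one_pos.trans ht
    rw [norm_of_nonneg (by positivity)]
    exact mul_le_of_le_one_left (by positivity) (min_le_right _ _)
  rw [← Ioo_union_Ici_eq_Ioi one_pos]
  exact near_zero.union ((integrableOn_Ici_iff_integrableOn_Ioi).mpr near_infinity)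

theorem integrable_min_rpow_abs_one_mul_rpow_neg {β p : ℝ} (hβ : p - 1 < β) (hp : 1 < p) :
    Integrable fun z : ℝ => min (|z| ^ β) 1 * |z| ^ (-p) :=
  integrable_comp_abs_of_integrableOn_Ioi (integrableOn_Ioi_min_rpow_one_mul_rpow_neg hβ hp)

theorem tendsto_setIntegral_lt_abs_sub {E : Type*} [NormedAddCommGroup E] [NormedSpace ℝ E]
    {f : ℝ → E} (hf : Integrable f) (x : ℝ) :
    Tendsto (fun ε : ℝ => ∫ y in {y : ℝ | ε < |y - x|}, f y) (𝓝[>] 0) (𝓝 (∫ y, f y)) := by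
  have hmeas : ∀ ε : ℝ, MeasurableSet {y : ℝ | ε < |y - x|} := fun ε =>
    measurableSet_lt measurable_const (by fun_prop)
  simp only [← integral_indicator (hmeas _)]
  refine tendsto_integral_filter_of_dominated_convergence (fun y => ‖f y‖)
    (Eventually.of_forall fun ε => hf.aestronglyMeasurable.indicator (hmeas ε))
    (Eventually.of_forall fun ε => Eventually.of_forall fun y => norm_indicator_le_norm_self f y)
    hf.norm ?_
  filter_upwards [Measure.ae_ne volume x] with y hy
  refine tendsto_const_nhds.congr' ?_
  filter_upwards [Ioo_mem_nhdsGT (abs_pos.mpr (sub_ne_zero.mpr hy))] with ε hε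
  exact (indicator_of_mem (s := {y : ℝ | ε < |y - x|}) hε.2 f).symm

theorem LK_eq_integral {K v : ℝ → ℝ} {x : ℝ}
    (hint : Integrable fun z => (v (x - z) - v x) * K z) :
    LK K v x = ∫ z, (v (x - z) - v x) * K z := by
  have hint' : Integrable fun y => (v y - v x) * K (x - y) := by
    simpa only [sub_sub_cancel] using hint.comp_sub_left x
  rw [LK, (tendsto_setIntegral_lt_abs_sub hint' x).limUnder_eq,
    ← integral_sub_left_eq_self _ volume x]
  simp only [sub_sub_cancel]

section KernelBound

variable {K v : ℝ → ℝ} {L p C γ : ℝ}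

theorem norm_sub_mul_kernel_le (hv : ∀ a b, |v a - v b| ≤ C * min (|a - b| ^ γ) 1) {z : ℝ}
    (hKz : |K z| ≤ L * |z| ^ (-p)) (x : ℝ) :
    ‖(v (x - z) - v x) * K z‖ ≤ C * L * (min (|z| ^ γ) 1 * |z| ^ (-p)) := by
  have hvz : |v (x - z) - v x| ≤ C * min (|z| ^ γ) 1 := by
    simpa only [sub_sub_cancel_left, abs_neg] using hv (x - z) x
  calc ‖(v (x - z) - v x) * K z‖ = |v (x - z) - v x| * |K z| := by
        rw [norm_mul, norm_eq_abs, norm_eq_abs]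
    _ ≤ C * min (|z| ^ γ) 1 * (L * |z| ^ (-p)) :=
        mul_le_mul hvz hKz (abs_nonneg _) ((abs_nonneg _).trans hvz)
    _ = C * L * (min (|z| ^ γ) 1 * |z| ^ (-p)) := by ring

theorem integrable_sub_mul_kernel (hKm : Measurable K) (hK : ∀ᵐ z, |K z| ≤ L * |z| ^ (-p))
    (hp : 1 < p) (hγ : p - 1 < γ) (hvm : Measurable v)
    (hv : ∀ a b, |v a - v b| ≤ C * min (|a - b| ^ γ) 1) (x : ℝ) :
    Integrable fun z => (v (x - z) - v x) * K z := by
  refine ((integrable_min_rpow_abs_one_mul_rpow_neg hγ hp).const_mul (C * L)).mono'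
    (by fun_prop) ?_
  filter_upwards [hK] with z hKz
  exact norm_sub_mul_kernel_le hv hKz x

theorem hasDerivAt_LK {β C' : ℝ} (hKm : Measurable K) (hK : ∀ᵐ z, |K z| ≤ L * |z| ^ (-p))
    (hp : 1 < p) (hγ : p - 1 < γ) (hβ : p - 1 < β) (hdiff : Differentiable ℝ v)
    (hv : ∀ a b, |v a - v b| ≤ C * min (|a - b| ^ γ) 1)
    (hv' : ∀ a b, |deriv v a - deriv v b| ≤ C' * min (|a - b| ^ β) 1) (x : ℝ) :
    HasDerivAt (LK K v) (LK K (deriv v) x) x := by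
  have hint : ∀ y, Integrable fun z => (v (y - z) - v y) * K z :=
    integrable_sub_mul_kernel hKm hK hp hγ hdiff.continuous.measurable hv
  have hint' : Integrable fun z => (deriv v (x - z) - deriv v x) * K z :=
    integrable_sub_mul_kernel hKm hK hp hβ (measurable_deriv v) hv' x
  have hderiv := hasDerivAt_integral_of_dominated_loc_of_deriv_le (x₀ := x) univ_mem
    (F := fun y z => (v (y - z) - v y) * K z)
    (F' := fun y z => (deriv v (y - z) - deriv v y) * K z)
    (Eventually.of_forall fun y => (hint y).aestronglyMeasurable) (hint x)
    hint'.aestronglyMeasurable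
    (by filter_upwards [hK] with z hKz y _ using norm_sub_mul_kernel_le hv' hKz y)
    ((integrable_min_rpow_abs_one_mul_rpow_neg hβ hp).const_mul (C' * L))
    (Eventually.of_forall fun z y _ =>
      (((hdiff _).hasDerivAt.comp_sub_const y z).sub (hdiff y).hasDerivAt).mul_const (K z))
  have hLK : LK K v = fun y => ∫ z, (v (y - z) - v y) * K z :=
    funext fun y => LK_eq_integral (hint y)
  rw [hLK, LK_eq_integral hint']
  exact hderiv.2

end KernelBound

theorem abs_sub_le_mul_min_rpow_one {v : ℝ → ℝ} {A B γ : ℝ}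
    (hA : ∀ a b, |v a - v b| ≤ A * |a - b| ^ γ) (hB : ∀ a, |v a| ≤ B) (a b : ℝ) :
    |v a - v b| ≤ max A (2 * B) * min (|a - b| ^ γ) 1 := by
  rcases le_total (|a - b| ^ γ) 1 with h | h
  · rw [min_eq_left h]
    exact (hA a b).trans (mul_le_mul_of_nonneg_right (le_max_left _ _) (by positivity))
  · rw [min_eq_right h, mul_one]
    calc |v a - v b| ≤ |v a| + |v b| := abs_sub _ _
      _ ≤ 2 * B := by linarith [hB a, hB b]
      _ ≤ max A (2 * B) := le_max_right _ _

theorem deriv_commutes_with_LK_low_order_general (s lam Lam α : ℝ)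
    (hs : s ∈ Set.Ioo (0:ℝ) 1)
    (hα : α ∈ Set.Ioc (2*s) 1) (hlam : 0 < lam)
    (K : ℝ → ℝ) (hKmeas : Measurable K)
    (hK2 : ∀ᵐ x : ℝ, lam / |x| ^ (1 + 2*s) ≤ K x ∧ K x ≤ Lam / |x| ^ (1 + 2*s))
    -- u ∈ C^{1,α}(ℝ)
    (u : ℝ → ℝ) (hdiff : Differentiable ℝ u)
    (hubdd : ∃ M : ℝ, ∀ x, |u x| ≤ M)
    (hu'bdd : ∃ M : ℝ, ∀ x, |deriv u x| ≤ M)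
    (hu'hold : ∃ M : ℝ, ∀ x y : ℝ, |deriv u x - deriv u y| ≤ M * |x - y| ^ α) :
    ∀ x : ℝ, HasDerivAt (LK K u) (LK K (deriv u) x) x := by
  obtain ⟨M₀, hM₀⟩ := hubdd
  obtain ⟨M₁, hM₁⟩ := hu'bdd
  obtain ⟨M₂, hM₂⟩ := hu'hold
  have hK : ∀ᵐ z : ℝ, |K z| ≤ Lam * |z| ^ (-(1 + 2 * s)) := by
    filter_upwards [hK2] with z ⟨hlower, hupper⟩
    rw [rpow_neg (abs_nonneg z), ← div_eq_mul_inv,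
      abs_of_nonneg ((div_nonneg hlam.le (by positivity)).trans hlower)]
    exact hupper
  have hu_lip : ∀ a b, |u a - u b| ≤ M₁ * |a - b| ^ (1 : ℝ) := fun a b => by
    simpa only [rpow_one, norm_eq_abs] using Convex.norm_image_sub_le_of_norm_deriv_le
      (fun y _ => hdiff y) (fun y _ => hM₁ y) convex_univ (mem_univ b) (mem_univ a)
  exact hasDerivAt_LK hKmeas hK (by linarith [hs.1]) (by linarith [hα.1, hα.2]) (by linarith [hα.1])
    hdiff (abs_sub_le_mul_min_rpow_one hu_lip hM₀)
    (abs_sub_le_mul_min_rpow_one hM₂ hM₁)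

theorem deriv_commutes_with_LK_low_order (s lam Lam α : ℝ)
    (hs : s ∈ Set.Ioo (0:ℝ) 1) (hs2 : 2*s < 1)
    (hα : α ∈ Set.Ioc (2*s) 1) (hlam : 0 < lam) (hlL : lam ≤ Lam)
    (K : ℝ → ℝ) (hKmeas : Measurable K)
    (hK1 : ∀ᵐ x : ℝ, K (-x) = K x)
    (hK2 : ∀ᵐ x : ℝ, lam / |x| ^ (1 + 2*s) ≤ K x ∧ K x ≤ Lam / |x| ^ (1 + 2*s))
    -- u ∈ C^{1,α}(ℝ)
    (u : ℝ → ℝ) (hdiff : Differentiable ℝ u)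
    (hubdd : ∃ M : ℝ, ∀ x, |u x| ≤ M)
    (hu'bdd : ∃ M : ℝ, ∀ x, |deriv u x| ≤ M)
    (hu'hold : ∃ M : ℝ, ∀ x y : ℝ, |deriv u x - deriv u y| ≤ M * |x - y| ^ α) :
    ∀ x : ℝ, HasDerivAt (LK K u) (LK K (deriv u) x) x :=
  deriv_commutes_with_LK_low_order_general s lam Lam α hs hα hlam K hKmeas hK2 u hdiff hubdd hu'bdd
    hu'hold
end

section
/- Let n=1 and s∈(0,1) with 2s≥1, let K satisfy (K1) and (K2), let α ∈ (2s−1,1], and let u ∈ C^{2,α}(ℝ). Then for every x∈ℝ, the derivative of L_K u at x exists and equals L_K u′(x); that is, (L_K u)′(x) = L_K u′(x). -/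
open MeasureTheory Filter Set Topology

noncomputable def symInt (K v : ℝ → ℝ) (x : ℝ) : ℝ :=
  ∫ z in Ioi (0:ℝ), (v (x+z) + v (x-z) - 2*v x) * K (-z)


lemma holder_cont {w : ℝ → ℝ} {D β : ℝ} (hβ : 0 < β)
    (h : ∀ a b, |w a - w b| ≤ D * |a - b| ^ β) : Continuous w := by
  rw [continuous_iff_continuousAt]
  intro a
  have h1 : Tendsto (fun y : ℝ => |y - a|) (𝓝 a) (𝓝 0) := by
    have := ((continuous_id.sub (continuous_const : Continuous fun _ : ℝ => a)).abs).tendsto a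
    simpa using this
  have h2 : ContinuousAt (fun t : ℝ => t ^ β) 0 :=
    Real.continuousAt_rpow_const 0 β (Or.inr hβ.le)
  have h0' : Tendsto (fun y => D * |y - a| ^ β) (𝓝 a) (𝓝 0) := by
    have := (h2.tendsto.comp h1).const_mul D
    simpa [Real.zero_rpow hβ.ne', Function.comp] using this
  rw [ContinuousAt, tendsto_iff_dist_tendsto_zero]
  apply squeeze_zero (fun y => dist_nonneg) (fun y => ?_) h0'
  rw [Real.dist_eq]
  calc |w y - w a| ≤ D * |y - a| ^ β := h y a

lemma kernel_ae {s lam Lam : ℝ} (hlam : 0 < lam) {K : ℝ → ℝ}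
    (hK1 : ∀ᵐ x : ℝ, K (-x) = K x)
    (hK2 : ∀ᵐ x : ℝ, lam / |x| ^ (1 + 2*s) ≤ K x ∧ K x ≤ Lam / |x| ^ (1 + 2*s)) :
    ∀ᵐ z : ℝ, 0 ≤ K (-z) ∧ K (-z) ≤ Lam * |z| ^ (-(1 + 2*s)) ∧ K (-z) = K z := by
  have hneg : ∀ᵐ z : ℝ, lam / |(-z)| ^ (1 + 2*s) ≤ K (-z) ∧ K (-z) ≤ Lam / |(-z)| ^ (1 + 2*s) :=
    (Measure.measurePreserving_neg (volume : Measure ℝ)).quasiMeasurePreserving.ae hK2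
  filter_upwards [hneg, hK1] with z hz h1
  rw [abs_neg] at hz
  refine ⟨le_trans (div_nonneg hlam.le (Real.rpow_nonneg (abs_nonneg z) _)) hz.1, ?_, h1⟩
  calc K (-z) ≤ Lam / |z| ^ (1 + 2*s) := hz.2
    _ = Lam * |z| ^ (-(1 + 2*s)) := by
        rw [Real.rpow_neg (abs_nonneg z), div_eq_mul_inv]

lemma tail_set_eq {ε : ℝ} : {z : ℝ | ε < |z|} = Iio (-ε) ∪ Ioi ε := by
  ext z
  simp only [mem_setOf_eq, lt_abs, mem_union, mem_Iio, mem_Ioi]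
  constructor
  · rintro (h | h)
    · right; exact h
    · left; linarith
  · rintro (h | h)
    · right; linarith
    · left; exact h

lemma tail_integrable {a : ℝ} (ha : a < -1) {ε : ℝ} (hε : 0 < ε) :
    IntegrableOn (fun z : ℝ => |z| ^ a) {z : ℝ | ε < |z|} := by
  rw [tail_set_eq]
  have hIoi : IntegrableOn (fun z : ℝ => |z| ^ a) (Ioi ε) := by
    apply (integrableOn_Ioi_rpow_of_lt ha hε).congr_fun (fun z hz => ?_) measurableSet_Ioi
    rw [abs_of_pos (hε.trans hz)]
  apply IntegrableOn.union _ hIoi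
  have key := (Measure.measurePreserving_neg (volume : Measure ℝ)).integrableOn_comp_preimage
    (MeasurableEquiv.neg ℝ).measurableEmbedding (f := fun z : ℝ => |z| ^ a) (s := Iio (-ε))
  apply key.mp
  have hpre : (Neg.neg : ℝ → ℝ) ⁻¹' Iio (-ε) = Ioi ε := by
    ext z; simp only [mem_preimage, mem_Iio, mem_Ioi]; constructor <;> intro h <;> linarith
  rw [hpre]
  apply hIoi.congr_fun (fun z hz => ?_) measurableSet_Ioi
  simp [Function.comp, abs_neg]

lemma Ioc_rpow_integrable {q : ℝ} (hq : -1 < q) (ε : ℝ) :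
    IntegrableOn (fun z : ℝ => z ^ q) (Ioc 0 ε) := by
  rcases le_or_gt ε 0 with h | h
  · rw [Ioc_eq_empty (by intro hc; exact absurd (hc.trans_le h) (lt_irrefl 0))]
    exact integrableOn_empty
  · exact (intervalIntegrable_iff_integrableOn_Ioc_of_le h.le).mp
      (intervalIntegral.intervalIntegrable_rpow' hq)

lemma Ioc_rpow_value {q : ℝ} (hq : -1 < q) {ε : ℝ} (hε : 0 ≤ ε) :
    ∫ z in Ioc (0:ℝ) ε, z ^ q = ε ^ (q+1) / (q+1) := by
  rw [← intervalIntegral.integral_of_le hε]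
  rw [integral_rpow (Or.inl hq)]
  rw [Real.zero_rpow (by linarith)]
  ring

lemma sd_bound {v : ℝ → ℝ} (hv : Differentiable ℝ v) (hw : Continuous (deriv v))
    {D β : ℝ} (hD : ∀ a b, |deriv v a - deriv v b| ≤ D * |a - b| ^ β)
    {x z : ℝ} (hz : 0 < z) :
    |v (x+z) + v (x-z) - 2*v x| ≤ D * z ^ β * z := by
  have ftc : ∀ a b : ℝ, ∫ t in a..b, deriv v t = v b - v a := fun a b =>
    intervalIntegral.integral_deriv_eq_sub (fun t _ => hv t) (hw.intervalIntegrable a b)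
  have h1 : v (x+z) - v x = ∫ t in x..(x+z), deriv v t := (ftc x (x+z)).symm
  have h2 : v x - v (x-z) = ∫ t in (x-z)..x, deriv v t := (ftc (x-z) x).symm
  have h3 : ∫ t in (x-z)..x, deriv v t = ∫ t in x..(x+z), deriv v (t - z) := by
    rw [intervalIntegral.integral_comp_sub_right (fun t => deriv v t) z]
    congr 1 <;> ring
  have h4 : v (x+z) + v (x-z) - 2*v x
      = ∫ t in x..(x+z), (deriv v t - deriv v (t - z)) := by
    have hsub := intervalIntegral.integral_sub (f := fun t => deriv v t)
      (g := fun t => deriv v (t - z)) (a := x) (b := x + z)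
      (hw.intervalIntegrable (μ := volume) _ _)
      ((hw.comp (continuous_id.sub continuous_const)).intervalIntegrable (μ := volume) _ _)
    rw [hsub, ← h1, ← h3, ← h2]; ring
  rw [h4]
  have := intervalIntegral.norm_integral_le_of_norm_le_const
    (C := D * z ^ β) (f := fun t => deriv v t - deriv v (t - z))
    (a := x) (b := x + z) ?_
  · rw [Real.norm_eq_abs] at this
    calc |∫ t in x..(x+z), (deriv v t - deriv v (t - z))| ≤ D * z ^ β * |x + z - x| := this
      _ = D * z ^ β * z := by rw [show x + z - x = z by ring, abs_of_pos hz]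
  · intro t _
    rw [Real.norm_eq_abs]
    calc |deriv v t - deriv v (t - z)| ≤ D * |t - (t - z)| ^ β := hD t (t - z)
      _ = D * z ^ β := by rw [show t - (t-z) = z by ring, abs_of_pos hz]
lemma core {s lam Lam D β M : ℝ}
    (hs0 : 0 < s) (hs1 : s < 1) (hlam : 0 < lam) (hlL : lam ≤ Lam)
    (hβ : 2*s - 1 < β) (hβ1 : 0 < β) (hβ2 : β ≤ 2)
    {K : ℝ → ℝ} (hKmeas : Measurable K)
    (hK1 : ∀ᵐ x : ℝ, K (-x) = K x)
    (hK2 : ∀ᵐ x : ℝ, lam / |x| ^ (1 + 2*s) ≤ K x ∧ K x ≤ Lam / |x| ^ (1 + 2*s))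
    {v : ℝ → ℝ} (hv : Differentiable ℝ v) (hM : ∀ x, |v x| ≤ M)
    (hD : ∀ a b, |deriv v a - deriv v b| ≤ D * |a - b| ^ β) :
    (∀ x : ℝ, ∀ ε : ℝ, 0 < ε →
      IntegrableOn (fun z => (v (x+z) - v x) * K (-z)) {z : ℝ | ε < |z|}) ∧
    (∀ x : ℝ, ∀ ε : ℝ, 0 < ε →
      (∫ y in {y : ℝ | ε < |y - x|}, (v y - v x) * K (x - y))
        = ∫ z in {z : ℝ | ε < |z|}, (v (x+z) - v x) * K (-z)) ∧
    (TendstoUniformlyOn (fun ε x => ∫ z in {z : ℝ | ε < |z|}, (v (x+z) - v x) * K (-z))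
       (symInt K v) (𝓝[>] (0:ℝ)) univ) ∧
    (∀ x, LK K v x = symInt K v x) := by
  have hLam : 0 < Lam := hlam.trans_le hlL
  have hD0 : 0 ≤ D := by
    have := hD 0 1
    simp only [show |(0:ℝ) - 1| = 1 by norm_num, Real.one_rpow, mul_one] at this
    exact (abs_nonneg _).trans this
  have hM0 : 0 ≤ M := (abs_nonneg _).trans (hM 0)
  have hw : Continuous (deriv v) := holder_cont hβ1 hD
  have hvc : Continuous v := hv.continuous
  have hKae := kernel_ae hlam hK1 hK2
  set q : ℝ := β - 2*s with hqdef
  have hq : -1 < q := by simp only [hqdef]; linarith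
  have hq1 : 0 < q + 1 := by linarith
  have hexp : -(1 + 2*s) < -1 := by linarith
  -- measurability
  have mF : ∀ x : ℝ, Measurable fun z => (v (x+z) - v x) * K (-z) := fun x =>
    (((hvc.comp (continuous_const.add continuous_id)).sub continuous_const).measurable).mul
      (hKmeas.comp measurable_neg)
  have mψ : ∀ x : ℝ, Measurable fun z => (v (x+z) + v (x-z) - 2*v x) * K (-z) := fun x =>
    ((((hvc.comp (continuous_const.add continuous_id)).add
      (hvc.comp (continuous_const.sub continuous_id))).sub continuous_const).measurable).mul
      (hKmeas.comp measurable_neg)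
  -- (1) integrability on the tail
  have Int1 : ∀ x : ℝ, ∀ ε : ℝ, 0 < ε →
      IntegrableOn (fun z => (v (x+z) - v x) * K (-z)) {z : ℝ | ε < |z|} := by
    intro x ε hε
    apply Integrable.mono' (((tail_integrable hexp hε).const_mul (2*M*Lam)))
      ((mF x).aestronglyMeasurable)
    filter_upwards [ae_restrict_of_ae hKae] with z hz
    rw [Real.norm_eq_abs, abs_mul, abs_of_nonneg hz.1]
    calc |v (x+z) - v x| * K (-z) ≤ (2*M) * (Lam * |z| ^ (-(1 + 2*s))) := by
          apply mul_le_mul _ hz.2.1 hz.1 (by positivity)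
          calc |v (x+z) - v x| ≤ |v (x+z)| + |v x| := abs_sub _ _
            _ ≤ M + M := add_le_add (hM _) (hM _)
            _ = 2*M := by ring
      _ = 2*M*Lam * |z| ^ (-(1 + 2*s)) := by ring
  refine ⟨Int1, ?_⟩
  -- (2) translation identity
  have Trans : ∀ x : ℝ, ∀ ε : ℝ, 0 < ε →
      (∫ y in {y : ℝ | ε < |y - x|}, (v y - v x) * K (x - y))
        = ∫ z in {z : ℝ | ε < |z|}, (v (x+z) - v x) * K (-z) := by
    intro x ε hε
    have hmp : MeasurePreserving (fun z : ℝ => x + z) volume volume :=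
      measurePreserving_add_left volume x
    have hemb : MeasurableEmbedding (fun z : ℝ => x + z) :=
      (MeasurableEquiv.addLeft x).measurableEmbedding
    have key := hmp.setIntegral_preimage_emb hemb
      (fun y => (v y - v x) * K (x - y)) {y : ℝ | ε < |y - x|}
    rw [← key]
    have hpre : (fun z : ℝ => x + z) ⁻¹' {y : ℝ | ε < |y - x|} = {z : ℝ | ε < |z|} := by
      ext z; simp [add_sub_cancel_left]
    rw [hpre]
    apply setIntegral_congr_fun (by
      rw [tail_set_eq]; exact measurableSet_Iio.union measurableSet_Ioi)
    intro z _
    simp only [show x - (x + z) = -z from by ring]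
  refine ⟨Trans, ?_⟩
  have hIoi_sub : ∀ ε : ℝ, 0 < ε → Ioi ε ⊆ {z : ℝ | ε < |z|} := by
    intro ε hε z hz
    simp only [mem_setOf_eq]
    rw [abs_of_pos (hε.trans hz)]
    exact hz
  have hIio_sub : ∀ ε : ℝ, 0 < ε → Iio (-ε) ⊆ {z : ℝ | ε < |z|} := by
    intro ε hε z hz
    simp only [mem_setOf_eq, mem_Iio] at *
    rw [abs_of_neg (by linarith)]
    linarith
  -- integrability of the reflected integrand
  have IntAux : ∀ x : ℝ, ∀ ε : ℝ, 0 < ε →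
      IntegrableOn (fun z => (v (x-z) - v x) * K (-z)) (Ioi ε) := by
    intro x ε hε
    have mG : Measurable (fun z : ℝ => (v (x - z) - v x) * K (-z)) := by
      have hm := hvc.measurable
      fun_prop
    apply Integrable.mono'
      (IntegrableOn.mono_set
        (((tail_integrable hexp hε).const_mul (2*M*Lam))) (hIoi_sub ε hε))
      mG.aestronglyMeasurable
    filter_upwards [ae_restrict_of_ae hKae] with z hz
    rw [Real.norm_eq_abs, abs_mul, abs_of_nonneg hz.1]
    calc |v (x-z) - v x| * K (-z) ≤ (2*M) * (Lam * |z| ^ (-(1 + 2*s))) := by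
          apply mul_le_mul _ hz.2.1 hz.1 (by positivity)
          calc |v (x-z) - v x| ≤ |v (x-z)| + |v x| := abs_sub _ _
            _ ≤ M + M := add_le_add (hM _) (hM _)
            _ = 2*M := by ring
      _ = 2*M*Lam * |z| ^ (-(1 + 2*s)) := by ring
  -- (3) reflection identity
  have Refl : ∀ x : ℝ, ∀ ε : ℝ, 0 < ε →
      (∫ z in {z : ℝ | ε < |z|}, (v (x+z) - v x) * K (-z))
        = ∫ z in Ioi ε, (v (x+z) + v (x-z) - 2*v x) * K (-z) := by
    intro x ε hε
    have hdisj : Disjoint (Iio (-ε)) (Ioi ε) := by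
      rw [Set.disjoint_left]
      intro t ht ht'
      simp only [mem_Iio] at ht
      simp only [mem_Ioi] at ht'
      linarith
    have hsplit : (∫ z in {z : ℝ | ε < |z|}, (v (x+z) - v x) * K (-z))
        = (∫ z in Iio (-ε), (v (x+z) - v x) * K (-z))
          + ∫ z in Ioi ε, (v (x+z) - v x) * K (-z) := by
      rw [← setIntegral_union hdisj measurableSet_Ioi
        (IntegrableOn.mono_set (Int1 x ε hε) (hIio_sub ε hε))
        (IntegrableOn.mono_set (Int1 x ε hε) (hIoi_sub ε hε))]
      rw [← tail_set_eq]
    rw [hsplit]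
    have hrefl : (∫ z in Iio (-ε), (v (x+z) - v x) * K (-z))
        = ∫ z in Ioi ε, (v (x-z) - v x) * K (-z) := by
      have key := (Measure.measurePreserving_neg (volume : Measure ℝ)).setIntegral_preimage_emb
        (MeasurableEquiv.neg ℝ).measurableEmbedding
        (fun z => (v (x+z) - v x) * K (-z)) (Iio (-ε))
      have hpre : (Neg.neg : ℝ → ℝ) ⁻¹' Iio (-ε) = Ioi ε := by
        ext z; simp only [mem_preimage, mem_Iio, mem_Ioi]
        constructor <;> intro h <;> linarith
      rw [hpre] at key
      rw [← key]
      apply integral_congr_ae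
      filter_upwards [ae_restrict_of_ae hKae] with z hz
      simp only [neg_neg, show x + -z = x - z from by ring]
      rw [hz.2.2]
    rw [hrefl, ← integral_add (IntAux x ε hε)
      (IntegrableOn.mono_set (Int1 x ε hε) (hIoi_sub ε hε))]
    apply setIntegral_congr_fun measurableSet_Ioi
    intro z _
    ring
  -- pointwise a.e. bound for the symmetrized integrand
  have ψbd : ∀ x : ℝ, ∀ᵐ z : ℝ, z ∈ Ioi (0:ℝ) →
      ‖(v (x+z) + v (x-z) - 2*v x) * K (-z)‖ ≤ D*Lam * z ^ q := by
    intro x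
    filter_upwards [hKae] with z hz hz0
    simp only [mem_Ioi] at hz0
    rw [Real.norm_eq_abs, abs_mul, abs_of_nonneg hz.1]
    have e1 : (D * z ^ β * z) * (Lam * |z| ^ (-(1 + 2*s))) = D*Lam * z ^ q := by
      rw [abs_of_pos hz0]
      have e2 : z ^ β * z = z ^ (β + 1) := by
        rw [Real.rpow_add hz0 β 1, Real.rpow_one]
      have e3 : z ^ (β+1) * z ^ (-(1+2*s)) = z ^ q := by
        rw [← Real.rpow_add hz0]
        congr 1
        simp only [hqdef]; ring
      calc (D * z ^ β * z) * (Lam * z ^ (-(1 + 2*s)))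
          = D * Lam * (z ^ (β+1) * z ^ (-(1+2*s))) := by rw [← e2]; ring
        _ = D * Lam * z ^ q := by rw [e3]
    rw [← e1]
    apply mul_le_mul (sd_bound hv hw hD hz0) hz.2.1 hz.1 (by positivity)
  -- (4) integrability of the symmetrized integrand on (0,∞)
  have Int2 : ∀ x : ℝ,
      IntegrableOn (fun z => (v (x+z) + v (x-z) - 2*v x) * K (-z)) (Ioi (0:ℝ)) := by
    intro x
    rw [← Ioc_union_Ioi_eq_Ioi (zero_le_one (α := ℝ))]
    apply IntegrableOn.union
    · apply Integrable.mono' ((Ioc_rpow_integrable hq 1).const_mul (D*Lam))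
        (mψ x).aestronglyMeasurable
      filter_upwards [ae_restrict_of_ae (ψbd x), ae_restrict_mem measurableSet_Ioc]
        with z h1 h2
      exact h1 (mem_Ioi.mpr h2.1)
    · apply Integrable.mono'
        (IntegrableOn.mono_set
          (((tail_integrable hexp one_pos).const_mul (4*M*Lam))) (hIoi_sub 1 one_pos))
        (mψ x).aestronglyMeasurable
      filter_upwards [ae_restrict_of_ae hKae] with z hz
      rw [Real.norm_eq_abs, abs_mul, abs_of_nonneg hz.1]
      calc |v (x+z) + v (x-z) - 2*v x| * K (-z)
          ≤ (4*M) * (Lam * |z| ^ (-(1 + 2*s))) := by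
            apply mul_le_mul _ hz.2.1 hz.1 (by positivity)
            have := abs_add_le (v (x+z)) (v (x-z))
            calc |v (x+z) + v (x-z) - 2*v x|
                ≤ |v (x+z) + v (x-z)| + |2*v x| := abs_sub _ _
              _ ≤ (|v (x+z)| + |v (x-z)|) + 2*|v x| := by
                  rw [abs_mul]
                  exact add_le_add (abs_add_le _ _) (by norm_num)
              _ ≤ (M + M) + 2*M := by
                  have h1 := hM (x+z); have h2 := hM (x-z); have h3 := hM x
                  nlinarith
              _ = 4*M := by ring
        _ = 4*M*Lam * |z| ^ (-(1 + 2*s)) := by ring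
  -- (5) quantitative tail estimate, uniform in x
  have Est : ∀ x : ℝ, ∀ ε : ℝ, 0 < ε →
      |(∫ z in Ioi ε, (v (x+z) + v (x-z) - 2*v x) * K (-z)) - symInt K v x|
        ≤ D*Lam * (ε ^ (q+1) / (q+1)) := by
    intro x ε hε
    have hIoiε : IntegrableOn (fun z => (v (x+z) + v (x-z) - 2*v x) * K (-z)) (Ioi ε) :=
      IntegrableOn.mono_set (Int2 x) (Ioi_subset_Ioi hε.le)
    have hIocε : IntegrableOn (fun z => (v (x+z) + v (x-z) - 2*v x) * K (-z)) (Ioc 0 ε) :=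
      IntegrableOn.mono_set (Int2 x) Ioc_subset_Ioi_self
    have hdisj : Disjoint (Ioc (0:ℝ) ε) (Ioi ε) := by
      rw [Set.disjoint_left]
      intro t ht ht'
      simp only [mem_Ioc] at ht
      simp only [mem_Ioi] at ht'
      linarith
    have hsplit : symInt K v x
        = (∫ z in Ioc (0:ℝ) ε, (v (x+z) + v (x-z) - 2*v x) * K (-z))
          + ∫ z in Ioi ε, (v (x+z) + v (x-z) - 2*v x) * K (-z) := by
      rw [symInt, ← setIntegral_union hdisj measurableSet_Ioi hIocε hIoiε,
        Ioc_union_Ioi_eq_Ioi hε.le]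
    rw [hsplit]
    rw [show (∫ z in Ioi ε, (v (x+z) + v (x-z) - 2*v x) * K (-z))
        - ((∫ z in Ioc (0:ℝ) ε, (v (x+z) + v (x-z) - 2*v x) * K (-z))
          + ∫ z in Ioi ε, (v (x+z) + v (x-z) - 2*v x) * K (-z))
        = -(∫ z in Ioc (0:ℝ) ε, (v (x+z) + v (x-z) - 2*v x) * K (-z)) from by ring]
    rw [abs_neg]
    have hval : ∫ z in Ioc (0:ℝ) ε, (D*Lam * z ^ q) = D*Lam * (ε ^ (q+1) / (q+1)) := by
      rw [integral_const_mul, Ioc_rpow_value hq hε.le]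
    rw [← hval, ← Real.norm_eq_abs]
    apply norm_integral_le_of_norm_le ((Ioc_rpow_integrable hq ε).const_mul (D*Lam))
    filter_upwards [ae_restrict_of_ae (ψbd x), ae_restrict_mem measurableSet_Ioc]
      with z h1 h2
    exact h1 (mem_Ioi.mpr h2.1)
  -- (6) uniform convergence
  have hb : Tendsto (fun ε : ℝ => D*Lam * (ε ^ (q+1) / (q+1))) (𝓝[>] (0:ℝ)) (𝓝 0) := by
    have h0 : Tendsto (fun ε : ℝ => ε ^ (q+1)) (𝓝 0) (𝓝 0) := by
      have := (Real.continuousAt_rpow_const 0 (q+1) (Or.inr hq1.le)).tendsto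
      rwa [Real.zero_rpow hq1.ne'] at this
    have := (h0.const_mul (D*Lam)).div_const (q+1)
    simp only [mul_zero, zero_div] at this
    have h2 : Tendsto (fun ε : ℝ => D*Lam * (ε ^ (q+1) / (q+1))) (𝓝 (0:ℝ)) (𝓝 0) := by
      apply this.congr (fun ε => by ring)
    exact h2.mono_left nhdsWithin_le_nhds
  have TU : TendstoUniformlyOn
      (fun ε x => ∫ z in {z : ℝ | ε < |z|}, (v (x+z) - v x) * K (-z))
      (symInt K v) (𝓝[>] (0:ℝ)) univ := by
    rw [Metric.tendstoUniformlyOn_iff]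
    intro δ hδ
    filter_upwards [self_mem_nhdsWithin, hb.eventually_lt_const hδ] with ε hε hlt x _
    simp only [mem_Ioi] at hε
    rw [Real.dist_eq, Refl x ε hε, abs_sub_comm]
    exact lt_of_le_of_lt (Est x ε hε) hlt
  refine ⟨TU, ?_⟩
  -- (7) identification of LK with the symmetrized integral
  intro x
  apply Filter.Tendsto.limUnder_eq
  apply Tendsto.congr' _ (TU.tendsto_at (mem_univ x))
  filter_upwards [self_mem_nhdsWithin] with ε hε
  exact (Trans x ε (mem_Ioi.mp hε)).symm

lemma lip_of_deriv_bdd {v : ℝ → ℝ} (hv : Differentiable ℝ v) (hw : Continuous (deriv v))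
    {C : ℝ} (hC : ∀ x, |deriv v x| ≤ C) (a b : ℝ) : |v a - v b| ≤ C * |a - b| := by
  have ftc : ∫ t in b..a, deriv v t = v a - v b :=
    intervalIntegral.integral_deriv_eq_sub (fun t _ => hv t)
      (hw.intervalIntegrable (μ := volume) b a)
  rw [← ftc, ← Real.norm_eq_abs]
  have := intervalIntegral.norm_integral_le_of_norm_le_const (C := C) (f := deriv v)
    (a := b) (b := a) (fun t _ => by rw [Real.norm_eq_abs]; exact hC t)
  calc ‖∫ t in b..a, deriv v t‖ ≤ C * |a - b| := this

lemma trunc_deriv {s lam Lam M1 : ℝ} (hs0 : 0 < s) (hlam : 0 < lam) (hlL : lam ≤ Lam)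
    {K : ℝ → ℝ} (hKmeas : Measurable K)
    (hK1 : ∀ᵐ x : ℝ, K (-x) = K x)
    (hK2 : ∀ᵐ x : ℝ, lam / |x| ^ (1 + 2*s) ≤ K x ∧ K x ≤ Lam / |x| ^ (1 + 2*s))
    {u : ℝ → ℝ} (hdiff : Differentiable ℝ u) (hdiff2 : Differentiable ℝ (deriv u))
    (hM1 : ∀ x, |deriv u x| ≤ M1)
    {ε : ℝ} (hε : 0 < ε) (x₀ : ℝ)
    (hint : IntegrableOn (fun z => (u (x₀+z) - u x₀) * K (-z)) {z : ℝ | ε < |z|}) :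
    HasDerivAt (fun x => ∫ z in {z : ℝ | ε < |z|}, (u (x+z) - u x) * K (-z))
      (∫ z in {z : ℝ | ε < |z|}, (deriv u (x₀+z) - deriv u x₀) * K (-z)) x₀ := by
  have hLam : 0 < Lam := hlam.trans_le hlL
  have hKae := kernel_ae hlam hK1 hK2
  have hexp : -(1 + 2*s) < -1 := by linarith
  have hM1' : 0 ≤ M1 := (abs_nonneg _).trans (hM1 0)
  have huc : Continuous u := hdiff.continuous
  have hu'c : Continuous (deriv u) := hdiff2.continuous
  have key := hasDerivAt_integral_of_dominated_loc_of_deriv_le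
    (μ := volume.restrict {z : ℝ | ε < |z|}) (x₀ := x₀)
    (F := fun x z => (u (x+z) - u x) * K (-z))
    (F' := fun x z => (deriv u (x+z) - deriv u x) * K (-z))
    (bound := fun z => 2*M1*Lam * |z| ^ (-(1 + 2*s)))
    (s := Metric.ball x₀ 1) (Metric.ball_mem_nhds x₀ one_pos) ?_ hint ?_ ?_ ?_ ?_
  · exact key.2
  · apply Eventually.of_forall
    intro x
    have hm : Measurable (fun z : ℝ => (u (x+z) - u x) * K (-z)) := by
      have := huc.measurable
      fun_prop
    exact hm.aestronglyMeasurable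
  · have hm : Measurable (fun z : ℝ => (deriv u (x₀+z) - deriv u x₀) * K (-z)) := by
      have := hu'c.measurable
      fun_prop
    exact hm.aestronglyMeasurable
  · filter_upwards [ae_restrict_of_ae hKae] with z hz x _
    rw [Real.norm_eq_abs, abs_mul, abs_of_nonneg hz.1]
    calc |deriv u (x+z) - deriv u x| * K (-z)
        ≤ (2*M1) * (Lam * |z| ^ (-(1 + 2*s))) := by
          apply mul_le_mul _ hz.2.1 hz.1 (by positivity)
          calc |deriv u (x+z) - deriv u x| ≤ |deriv u (x+z)| + |deriv u x| := abs_sub _ _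
            _ ≤ M1 + M1 := add_le_add (hM1 _) (hM1 _)
            _ = 2*M1 := by ring
      _ = 2*M1*Lam * |z| ^ (-(1 + 2*s)) := by ring
  · exact (tail_integrable hexp hε).const_mul (2*M1*Lam)
  · apply Eventually.of_forall
    intro z x _
    have h1 : HasDerivAt (fun x => u (x + z)) (deriv u (x + z)) x := by
      have := ((hdiff (x+z)).hasDerivAt).comp x ((hasDerivAt_id x).add_const z)
      simpa [Function.comp_def] using this
    exact (h1.sub (hdiff x).hasDerivAt).mul_const (K (-z))

theorem deriv_commutes_with_LK_high_order (s lam Lam α : ℝ)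
    (hs : s ∈ Set.Ioo (0:ℝ) 1) (hs2 : 1 ≤ 2*s)
    (hα : α ∈ Set.Ioc (2*s - 1) 1) (hlam : 0 < lam) (hlL : lam ≤ Lam)
    (K : ℝ → ℝ) (hKmeas : Measurable K)
    (hK1 : ∀ᵐ x : ℝ, K (-x) = K x)
    (hK2 : ∀ᵐ x : ℝ, lam / |x| ^ (1 + 2*s) ≤ K x ∧ K x ≤ Lam / |x| ^ (1 + 2*s))
    -- u ∈ C^{2,α}(ℝ)
    (u : ℝ → ℝ) (hdiff : Differentiable ℝ u) (hdiff2 : Differentiable ℝ (deriv u))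
    (hubdd : ∃ M : ℝ, ∀ x, |u x| ≤ M)
    (hu'bdd : ∃ M : ℝ, ∀ x, |deriv u x| ≤ M)
    (hu''bdd : ∃ M : ℝ, ∀ x, |deriv (deriv u) x| ≤ M)
    (hu''hold : ∃ M : ℝ, ∀ x y : ℝ,
      |deriv (deriv u) x - deriv (deriv u) y| ≤ M * |x - y| ^ α) :
    ∀ x : ℝ, HasDerivAt (LK K u) (LK K (deriv u) x) x := by
  obtain ⟨hs0, hs1⟩ := hs
  obtain ⟨hα1, hα2⟩ := hα
  obtain ⟨M0, hM0⟩ := hubdd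
  obtain ⟨M1, hM1⟩ := hu'bdd
  obtain ⟨M2, hM2⟩ := hu''bdd
  obtain ⟨Mα, hMα⟩ := hu''hold
  have hαpos : 0 < α := by linarith
  have hu''c : Continuous (deriv (deriv u)) := holder_cont hαpos hMα
  -- Hölder-type control of deriv u with exponent 1
  have hDu : ∀ a b, |deriv u a - deriv u b| ≤ M2 * |a - b| ^ (1:ℝ) := by
    intro a b
    rw [Real.rpow_one]
    exact lip_of_deriv_bdd hdiff2 hu''c hM2 a b
  have coreU := core hs0 hs1 hlam hlL (by linarith : 2*s - 1 < (1:ℝ)) one_pos one_le_two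
    hKmeas hK1 hK2 hdiff hM0 hDu
  have coreU' := core hs0 hs1 hlam hlL hα1 hαpos (by linarith : α ≤ 2)
    hKmeas hK1 hK2 hdiff2 hM1 hMα
  obtain ⟨IntU, TransU, TUu, LKu⟩ := coreU
  obtain ⟨IntU', TransU', TUu', LKu'⟩ := coreU'
  intro x
  have main : HasDerivAt (symInt K u) (symInt K (deriv u) x) x := by
    apply hasDerivAt_of_tendstoUniformlyOn isOpen_univ TUu'
      (f := fun ε x => ∫ z in {z : ℝ | ε < |z|}, (u (x+z) - u x) * K (-z)) ?_ ?_ (mem_univ x)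
    · filter_upwards [self_mem_nhdsWithin] with ε hε
      intro y _
      exact trunc_deriv hs0 hlam hlL hKmeas hK1 hK2 hdiff hdiff2 hM1
        (mem_Ioi.mp hε) y (IntU y ε (mem_Ioi.mp hε))
    · intro y _
      exact TUu.tendsto_at (mem_univ y)
  have e1 : LK K u = symInt K u := funext LKu
  rw [e1, LKu' x]
  exact main
end

section
/- Let n=1 and s∈(0,1) with 2s<1, let K satisfy (K1) and (K2), let α ∈ (2s,1], and let u ∈ C^{0,α}(ℝ). Then L_K u ∈ C^{0,α−2s}(ℝ), and there is a constant C>0, depending only on s and α, such that [L_K u]_{C^{0,α−2s}(ℝ)} ≤ C Λ [u]_{C^{0,α}(ℝ)}. -/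
open MeasureTheory Filter Set Topology

/-- The Hölder seminorm `[v]_{C^{0,θ}(ℝ)}`. -/
noncomputable def holderSemi (θ : ℝ) (v : ℝ → ℝ) : ℝ :=
  sSup {r : ℝ | ∃ x y : ℝ, x ≠ y ∧ r = |v x - v y| / |x - y| ^ θ}

lemma integrable_comp_abs' {G : ℝ → ℝ} (h : IntegrableOn G (Ioi 0)) :
    Integrable (fun z : ℝ => G |z|) := by
  have h1 : IntegrableOn (fun z : ℝ => G |z|) (Ioi 0) := by
    apply h.congr_fun (fun x hx => ?_) measurableSet_Ioi
    rw [abs_of_pos hx]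
  have h2 : IntegrableOn (fun z : ℝ => G |z|) (Iic 0) := by
    rw [IntegrableOn, ← Measure.map_neg_eq_self (volume : Measure ℝ)]
    have m : MeasurableEmbedding fun x : ℝ => -x :=
      (Homeomorph.neg ℝ).measurableEmbedding
    rw [m.restrict_map, m.integrable_map_iff]
    simp_rw [Function.comp_def, abs_neg, neg_preimage, neg_Iic, neg_zero]
    exact (integrableOn_Ici_iff_integrableOn_Ioi).mpr h1
  have := h2.union h1
  rwa [Iic_union_Ioi, integrableOn_univ] at this

lemma g_int (s α : ℝ) (hs : 0 < s) (hsα : 2*s < α) (hα1 : α ≤ 1)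
    {δ : ℝ} (hδ : 0 < δ) :
    Integrable (fun z : ℝ => min (|z| ^ α) (δ ^ α) * |z| ^ (-(1+2*s))) ∧
    ∫ z : ℝ, min (|z| ^ α) (δ ^ α) * |z| ^ (-(1+2*s))
      ≤ (2/(α-2*s) + 1/s) * δ ^ (α-2*s) := by
  have hα0 : 0 < α := lt_trans (by linarith) hsα
  set G : ℝ → ℝ := fun t => min (t ^ α) (δ ^ α) * t ^ (-(1+2*s)) with hG
  have e1 : EqOn G (fun t : ℝ => t ^ (α + (-(1+2*s)))) (Ioc 0 δ) := by
    intro t ht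
    have h1 : t ^ α ≤ δ ^ α := Real.rpow_le_rpow ht.1.le ht.2 hα0.le
    simp only [hG, min_eq_left h1, Real.rpow_add ht.1]
  have i1 : IntegrableOn G (Ioc 0 δ) := by
    apply (IntegrableOn.congr_fun ?_ e1.symm measurableSet_Ioc)
    rw [← intervalIntegrable_iff_integrableOn_Ioc_of_le hδ.le]
    exact intervalIntegral.intervalIntegrable_rpow' (by linarith)
  have v1 : ∫ t in Ioc 0 δ, G t = δ ^ (α - 2*s) / (α - 2*s) := by
    rw [setIntegral_congr_fun measurableSet_Ioc e1]
    rw [← intervalIntegral.integral_of_le hδ.le,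
      integral_rpow (Or.inl (by linarith))]
    rw [Real.zero_rpow (by linarith)]
    norm_num
    ring_nf
  have e2 : EqOn G (fun t : ℝ => δ ^ α * t ^ (-(1+2*s))) (Ioi δ) := by
    intro t ht
    have h1 : δ ^ α ≤ t ^ α := Real.rpow_le_rpow hδ.le (le_of_lt ht) hα0.le
    simp only [hG, min_eq_right h1]
  have i2 : IntegrableOn G (Ioi δ) := by
    apply (IntegrableOn.congr_fun ?_ e2.symm measurableSet_Ioi)
    exact (integrableOn_Ioi_rpow_of_lt (by linarith) hδ).const_mul _
  have v2 : ∫ t in Ioi δ, G t = δ ^ (α - 2*s) / (2*s) := by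
    rw [setIntegral_congr_fun measurableSet_Ioi e2, integral_const_mul,
      integral_Ioi_rpow_of_lt (by linarith) hδ]
    rw [show -(1+2*s) + 1 = -(2*s) by ring, Real.rpow_neg hδ.le,
      show α - 2*s = α + -(2*s) by ring, Real.rpow_add hδ, Real.rpow_neg hδ.le]
    field_simp
  have hIoi : IntegrableOn G (Ioi 0) := by
    have := i1.union i2
    rwa [Ioc_union_Ioi_eq_Ioi hδ.le] at this
  have hint : Integrable (fun z : ℝ => G |z|) := integrable_comp_abs' hIoi
  have habs : (fun z : ℝ => min (|z| ^ α) (δ ^ α) * |z| ^ (-(1+2*s)))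
      = fun z : ℝ => G |z| := rfl
  constructor
  · rw [habs]; exact hint
  · rw [habs, integral_comp_abs (f := G)]
    rw [← Ioc_union_Ioi_eq_Ioi hδ.le,
      setIntegral_union (Ioc_disjoint_Ioi le_rfl) measurableSet_Ioi i1 i2, v1, v2]
    have h2s : 0 < α - 2*s := by linarith
    have hD : 0 ≤ δ ^ (α - 2*s) := Real.rpow_nonneg hδ.le _
    have heq : (2/(α-2*s) + 1/s) * δ ^ (α-2*s)
        = 2*(δ^(α-2*s)/(α-2*s)) + δ^(α-2*s)/s := by ring
    have h3 : δ^(α-2*s)/(2*s) = (δ^(α-2*s)/s)/2 := by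
      rw [div_div]; ring_nf
    rw [heq]
    have h4 : 0 ≤ δ^(α-2*s)/(α-2*s) := div_nonneg hD h2s.le
    have h5 : 0 ≤ δ^(α-2*s)/s := div_nonneg hD hs.le
    linarith

theorem holder_regularity_low_order (s α : ℝ)
    (hs : s ∈ Set.Ioo (0:ℝ) 1) (hs2 : 2*s < 1) (hα : α ∈ Set.Ioc (2*s) 1) :
    -- the constant C depends only on s and α
    ∃ C > (0:ℝ), ∀ lam Lam : ℝ, 0 < lam → lam ≤ Lam →
      ∀ K : ℝ → ℝ, Measurable K → (∀ᵐ x : ℝ, K (-x) = K x) →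
        (∀ᵐ x : ℝ, lam / |x| ^ (1 + 2*s) ≤ K x ∧ K x ≤ Lam / |x| ^ (1 + 2*s)) →
      -- u ∈ C^{0,α}(ℝ)
      ∀ u : ℝ → ℝ, (∃ M : ℝ, ∀ x, |u x| ≤ M) →
        BddAbove {r : ℝ | ∃ x y : ℝ, x ≠ y ∧ r = |u x - u y| / |x - y| ^ α} →
        -- conclusion: L_K u ∈ C^{0,α-2s}(ℝ) with seminorm bound
        (∃ M : ℝ, ∀ x, |LK K u x| ≤ M) ∧
        BddAbove {r : ℝ | ∃ x y : ℝ, x ≠ y ∧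
          r = |LK K u x - LK K u y| / |x - y| ^ (α - 2*s)} ∧
        holderSemi (α - 2*s) (LK K u) ≤ C * Lam * holderSemi α u := by
  obtain ⟨hs0, hs1⟩ := hs
  obtain ⟨hα2s, hα1⟩ := hα
  have hα0 : 0 < α := lt_trans (by linarith) hα2s
  have hd : 0 < α - 2*s := by linarith
  set C0 : ℝ := 2/(α-2*s) + 1/s with hC0
  have hC0pos : 0 < C0 := by positivity
  refine ⟨2*C0, by positivity, ?_⟩
  intro lam Lam hlam hlamLam K hKmeas hKsymm hKbound u hMex hBdd
  obtain ⟨M, hM⟩ := hMex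
  have hM0 : 0 ≤ M := le_trans (abs_nonneg _) (hM 0)
  have hLam : 0 < Lam := lt_of_lt_of_le hlam hlamLam
  set Cu := holderSemi α u with hCudef
  have hCuS : Cu = sSup {r : ℝ | ∃ x y : ℝ, x ≠ y ∧ r = |u x - u y| / |x - y| ^ α} := rfl
  have humem : ∀ x y : ℝ, x ≠ y → |u x - u y| / |x - y| ^ α ≤ Cu := by
    intro x y hxy
    rw [hCuS]
    exact le_csSup hBdd ⟨x, y, hxy, rfl⟩
  have hCu0 : 0 ≤ Cu := by
    have := humem 0 1 (by norm_num)
    have h0 : 0 ≤ |u 0 - u 1| / |(0:ℝ) - 1| ^ α := by positivity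
    linarith
  have hu : ∀ x y : ℝ, |u x - u y| ≤ Cu * |x - y| ^ α := by
    intro x y
    rcases eq_or_ne x y with rfl | hxy
    · simpa using mul_nonneg hCu0 (Real.rpow_nonneg (abs_nonneg (x - x)) α)
    · have hpos : 0 < |x - y| ^ α :=
        Real.rpow_pos_of_pos (abs_pos.mpr (sub_ne_zero.mpr hxy)) _
      have := humem x y hxy
      rw [div_le_iff₀ hpos] at this
      linarith
  have hu_cont : Continuous u := by
    rw [Metric.continuous_iff]
    intro x ε hε
    refine ⟨(ε/(Cu+1)) ^ (α⁻¹), Real.rpow_pos_of_pos (by positivity) _, fun y hy => ?_⟩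
    have h1 : |y - x| ^ α ≤ ((ε/(Cu+1)) ^ (α⁻¹)) ^ α :=
      Real.rpow_le_rpow (abs_nonneg _) (le_of_lt (by rwa [Real.dist_eq] at hy)) hα0.le
    rw [Real.rpow_inv_rpow (by positivity) hα0.ne'] at h1
    have h2 : |u y - u x| ≤ Cu * (ε/(Cu+1)) :=
      le_trans (hu y x) (mul_le_mul_of_nonneg_left h1 hCu0)
    rw [Real.dist_eq]
    calc |u y - u x| ≤ Cu * (ε/(Cu+1)) := h2
      _ < ε := by
          rw [mul_comm, div_mul_eq_mul_div, div_lt_iff₀ (by positivity)]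
          nlinarith
  have hne0 : ∀ᵐ z : ℝ, z ≠ (0:ℝ) := by
    refine ae_iff.mpr ?_
    simp only [not_not, setOf_eq_eq_singleton]
    exact measure_singleton 0
  have hK' : ∀ᵐ z : ℝ, 0 ≤ K z ∧ K z ≤ Lam * |z| ^ (-(1+2*s)) := by
    filter_upwards [hKbound, hne0] with z hz hz0
    have habs : 0 < |z| := abs_pos.mpr hz0
    have hp : 0 < |z| ^ (1+2*s) := Real.rpow_pos_of_pos habs _
    constructor
    · exact le_trans (div_nonneg hlam.le hp.le) hz.1
    · calc K z ≤ Lam / |z| ^ (1+2*s) := hz.2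
        _ = Lam * |z| ^ (-(1+2*s)) := by
            rw [Real.rpow_neg (abs_nonneg z), div_eq_mul_inv]
  set g : ℝ → ℝ → ℝ := fun δ z => min (|z| ^ α) (δ ^ α) * |z| ^ (-(1+2*s)) with hg
  have hgint : ∀ δ : ℝ, 0 < δ → Integrable (g δ) :=
    fun δ hδ => (g_int s α hs0 hα2s hα1 hδ).1
  have hgval : ∀ δ : ℝ, 0 < δ → ∫ z, g δ z ≤ C0 * δ ^ (α - 2*s) :=
    fun δ hδ => (g_int s α hs0 hα2s hα1 hδ).2
  have hg0 : ∀ δ : ℝ, 0 < δ → ∀ z : ℝ, 0 ≤ g δ z := fun δ hδ z =>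
    mul_nonneg (le_min (Real.rpow_nonneg (abs_nonneg z) α)
      (Real.rpow_nonneg hδ.le α)) (Real.rpow_nonneg (abs_nonneg z) _)
  have hmeas : ∀ x : ℝ, AEStronglyMeasurable (fun y => (u y - u x) * K (x - y)) volume := by
    intro x
    exact ((hu_cont.measurable.sub measurable_const).mul
      (hKmeas.comp (measurable_const.sub measurable_id))).aestronglyMeasurable
  have haeK : ∀ x : ℝ, ∀ᵐ y : ℝ, 0 ≤ K (x - y) ∧ K (x - y) ≤ Lam * |x - y| ^ (-(1+2*s)) := by
    intro x
    exact (Measure.measurePreserving_sub_left volume x).quasiMeasurePreserving.ae hK'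
  have hub : ∀ (δ x y : ℝ), |y - x| ≤ δ → |u y - u x| ≤ Cu * min (|y - x| ^ α) (δ ^ α) := by
    intro δ x y h
    have hm : |y - x| ^ α ≤ δ ^ α := Real.rpow_le_rpow (abs_nonneg _) h hα0.le
    rw [min_eq_left hm]
    exact hu y x
  -- pointwise a.e. bound for the full integrand
  have hptb : ∀ x : ℝ, ∀ᵐ y : ℝ,
      ‖(u y - u x) * K (x - y)‖ ≤ Lam * (Cu + 2*M) * g 1 (y - x) := by
    intro x
    filter_upwards [haeK x] with y hy
    have h1 : |u y - u x| ≤ (Cu + 2*M) * min (|y - x| ^ α) ((1:ℝ) ^ α) := by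
      rw [Real.one_rpow]
      rcases le_or_gt (|y - x|) 1 with h | h
      · have hm : |y - x| ^ α ≤ 1 := Real.rpow_le_one (abs_nonneg _) h hα0.le
        rw [min_eq_left hm]
        calc |u y - u x| ≤ Cu * |y - x| ^ α := hu y x
          _ ≤ (Cu + 2*M) * |y - x| ^ α :=
              mul_le_mul_of_nonneg_right (by linarith)
                (Real.rpow_nonneg (abs_nonneg _) _)
      · have hm : (1:ℝ) ≤ |y - x| ^ α := Real.one_le_rpow (le_of_lt h) hα0.le
        rw [min_eq_right hm]
        calc |u y - u x| ≤ |u y| + |u x| := abs_sub _ _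
          _ ≤ 2*M := by linarith [hM y, hM x]
          _ ≤ (Cu + 2*M) * 1 := by linarith
    rw [norm_mul, Real.norm_eq_abs, Real.norm_eq_abs, abs_of_nonneg hy.1]
    calc |u y - u x| * K (x - y)
        ≤ ((Cu + 2*M) * min (|y - x| ^ α) ((1:ℝ) ^ α)) * (Lam * |x - y| ^ (-(1+2*s))) :=
          mul_le_mul h1 hy.2 hy.1 (by positivity)
      _ = Lam * (Cu + 2*M) * g 1 (y - x) := by
          rw [hg, abs_sub_comm x y]; ring
  have hfxint : ∀ x : ℝ, Integrable (fun y => (u y - u x) * K (x - y)) := by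
    intro x
    have hB : Integrable (fun y : ℝ => Lam * (Cu + 2*M) * g 1 (y - x)) :=
      ((hgint 1 one_pos).const_mul (Lam * (Cu + 2*M))).comp_sub_right x
    exact hB.mono' (hmeas x) (hptb x)
  -- identification of LK with the absolutely convergent integral
  have hLKeq : ∀ x : ℝ, LK K u x = ∫ y, (u y - u x) * K (x - y) := by
    intro x
    apply Filter.Tendsto.limUnder_eq
    have hSm : ∀ ε : ℝ, MeasurableSet {y : ℝ | ε < |y - x|} := fun ε =>
      measurableSet_lt measurable_const
        (continuous_abs.comp (continuous_id.sub continuous_const)).measurable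
    have hJ : ∀ ε : ℝ, 0 < ε →
        ‖∫ y in {y : ℝ | ε < |y - x|}ᶜ, (u y - u x) * K (x - y)‖
          ≤ (Lam * Cu * C0) * ε ^ (α-2*s) := by
      intro ε hε
      have hgε : Integrable (fun y : ℝ => Lam * Cu * g ε (y - x)) :=
        ((hgint ε hε).const_mul _).comp_sub_right x
      have hle : ∀ᵐ y ∂(volume.restrict {y : ℝ | ε < |y - x|}ᶜ),
          ‖(u y - u x) * K (x - y)‖ ≤ Lam * Cu * g ε (y - x) := by
        refine (ae_restrict_iff' (hSm ε).compl).mpr ?_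
        filter_upwards [haeK x] with y hy hyc
        have hyε : |y - x| ≤ ε := by
          simp only [mem_compl_iff, mem_setOf_eq, not_lt] at hyc
          exact hyc
        have h1 : |u y - u x| ≤ Cu * min (|y - x| ^ α) (ε ^ α) := hub ε x y hyε
        rw [norm_mul, Real.norm_eq_abs, Real.norm_eq_abs, abs_of_nonneg hy.1]
        calc |u y - u x| * K (x - y)
            ≤ (Cu * min (|y - x| ^ α) (ε ^ α)) * (Lam * |x - y| ^ (-(1+2*s))) :=
              mul_le_mul h1 hy.2 hy.1 (by positivity)
          _ = Lam * Cu * g ε (y - x) := by rw [hg, abs_sub_comm x y]; ring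
      calc ‖∫ y in {y : ℝ | ε < |y - x|}ᶜ, (u y - u x) * K (x - y)‖
          ≤ ∫ y in {y : ℝ | ε < |y - x|}ᶜ, Lam * Cu * g ε (y - x) :=
            norm_integral_le_of_norm_le hgε.integrableOn hle
        _ ≤ ∫ y, Lam * Cu * g ε (y - x) :=
            setIntegral_le_integral hgε
              (Eventually.of_forall fun y => mul_nonneg (by positivity) (hg0 ε hε _))
        _ = Lam * Cu * ∫ y, g ε (y - x) := integral_const_mul _ _
        _ = Lam * Cu * ∫ z, g ε z := by rw [integral_sub_right_eq_self (g ε) x]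
        _ ≤ Lam * Cu * (C0 * ε ^ (α-2*s)) :=
            mul_le_mul_of_nonneg_left (hgval ε hε) (by positivity)
        _ = (Lam * Cu * C0) * ε ^ (α-2*s) := by ring
    have htail : Tendsto
        (fun ε => ∫ y in {y : ℝ | ε < |y - x|}ᶜ, (u y - u x) * K (x - y))
        (𝓝[>] (0:ℝ)) (𝓝 0) := by
      apply squeeze_zero_norm'
      · filter_upwards [self_mem_nhdsWithin] with ε hε
        exact hJ ε hε
      · have h1 : Tendsto (fun ε : ℝ => ε ^ (α - 2*s)) (𝓝[>] (0:ℝ)) (𝓝 0) := by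
          have h2 := (Real.continuousAt_rpow_const 0 (α - 2*s) (Or.inr hd.le)).tendsto
          rw [Real.zero_rpow hd.ne'] at h2
          exact h2.mono_left nhdsWithin_le_nhds
        have h3 := h1.const_mul (Lam * Cu * C0)
        rwa [mul_zero] at h3
    have hsplit : ∀ᶠ ε in 𝓝[>] (0:ℝ),
        ((∫ y, (u y - u x) * K (x - y))
          - ∫ y in {y : ℝ | ε < |y - x|}ᶜ, (u y - u x) * K (x - y))
        = ∫ y in {y : ℝ | ε < |y - x|}, (u y - u x) * K (x - y) := by
      filter_upwards [self_mem_nhdsWithin] with ε hε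
      have h4 := integral_add_compl (hSm ε) (hfxint x)
      linarith
    have h5 : Tendsto
        (fun ε => (∫ y, (u y - u x) * K (x - y))
          - ∫ y in {y : ℝ | ε < |y - x|}ᶜ, (u y - u x) * K (x - y))
        (𝓝[>] (0:ℝ)) (𝓝 ((∫ y, (u y - u x) * K (x - y)) - 0)) :=
      tendsto_const_nhds.sub htail
    rw [sub_zero] at h5
    exact Tendsto.congr' hsplit h5
  -- uniform bound
  have hbound : ∀ x : ℝ, |LK K u x| ≤ Lam * (Cu + 2*M) * (C0 * (1:ℝ) ^ (α - 2*s)) := by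
    intro x
    rw [hLKeq x, ← Real.norm_eq_abs]
    have hB : Integrable (fun y : ℝ => Lam * (Cu + 2*M) * g 1 (y - x)) :=
      ((hgint 1 one_pos).const_mul (Lam * (Cu + 2*M))).comp_sub_right x
    calc ‖∫ y, (u y - u x) * K (x - y)‖
        ≤ ∫ y, Lam * (Cu + 2*M) * g 1 (y - x) :=
          norm_integral_le_of_norm_le hB (hptb x)
      _ = Lam * (Cu + 2*M) * ∫ y, g 1 (y - x) := integral_const_mul _ _
      _ = Lam * (Cu + 2*M) * ∫ z, g 1 z := by rw [integral_sub_right_eq_self (g 1) x]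
      _ ≤ Lam * (Cu + 2*M) * (C0 * (1:ℝ) ^ (α - 2*s)) :=
          mul_le_mul_of_nonneg_left (hgval 1 one_pos) (by positivity)
  -- Hölder estimate
  have hdiff : ∀ x x' : ℝ, |LK K u x - LK K u x'| ≤ 2*C0*Lam*Cu * |x - x'| ^ (α - 2*s) := by
    intro x x'
    rcases eq_or_ne x x' with rfl | hxx
    · simp [sub_self, abs_zero, Real.zero_rpow hd.ne']
    · set δ := |x - x'| with hδdef
      have hδ : 0 < δ := abs_pos.mpr (sub_ne_zero.mpr hxx)
      have hshift : ∀ w : ℝ, LK K u w = ∫ z, (u (w - z) - u w) * K z := by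
        intro w
        rw [hLKeq w, ← integral_sub_left_eq_self (fun y => (u y - u w) * K (w - y)) volume w]
        congr 1
        funext z
        rw [sub_sub_cancel]
      have hint : ∀ w : ℝ, Integrable (fun z => (u (w - z) - u w) * K z) := by
        intro w
        have h6 := (hfxint w).comp_sub_left w
        simpa [sub_sub_cancel] using h6
      rw [hshift x, hshift x', ← integral_sub (hint x) (hint x'), ← Real.norm_eq_abs]
      have hptd : ∀ᵐ z : ℝ,
          ‖(u (x - z) - u x) * K z - (u (x' - z) - u x') * K z‖ ≤ 2*Lam*Cu * g δ z := by
        filter_upwards [hK'] with z hz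
        have hA : |(u (x - z) - u x) - (u (x' - z) - u x')| ≤ 2*Cu * min (|z| ^ α) (δ ^ α) := by
          rw [mul_min_of_nonneg _ _ (by positivity : (0:ℝ) ≤ 2*Cu)]
          refine le_min ?_ ?_
          · calc |(u (x - z) - u x) - (u (x' - z) - u x')|
                ≤ |u (x - z) - u x| + |u (x' - z) - u x'| := abs_sub _ _
              _ ≤ Cu * |x - z - x| ^ α + Cu * |x' - z - x'| ^ α :=
                  add_le_add (hu _ _) (hu _ _)
              _ = 2*Cu * |z| ^ α := by
                  rw [show x - z - x = -z by ring, show x' - z - x' = -z by ring, abs_neg]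
                  ring
          · calc |(u (x - z) - u x) - (u (x' - z) - u x')|
                = |(u (x - z) - u (x' - z)) - (u x - u x')| := by
                  rw [show (u (x - z) - u x) - (u (x' - z) - u x')
                    = (u (x - z) - u (x' - z)) - (u x - u x') by ring]
              _ ≤ |u (x - z) - u (x' - z)| + |u x - u x'| := abs_sub _ _
              _ ≤ Cu * |x - z - (x' - z)| ^ α + Cu * |x - x'| ^ α :=
                  add_le_add (hu _ _) (hu _ _)
              _ = 2*Cu * δ ^ α := by
                  rw [show x - z - (x' - z) = x - x' by ring, hδdef]
                  ring
        rw [← sub_mul, norm_mul, Real.norm_eq_abs, Real.norm_eq_abs, abs_of_nonneg hz.1]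
        calc |(u (x - z) - u x) - (u (x' - z) - u x')| * K z
            ≤ (2*Cu * min (|z| ^ α) (δ ^ α)) * (Lam * |z| ^ (-(1+2*s))) :=
              mul_le_mul hA hz.2 hz.1 (by positivity)
          _ = 2*Lam*Cu * g δ z := by rw [hg]; ring
      calc ‖∫ z, ((u (x - z) - u x) * K z - (u (x' - z) - u x') * K z)‖
          ≤ ∫ z, 2*Lam*Cu * g δ z :=
            norm_integral_le_of_norm_le ((hgint δ hδ).const_mul _) hptd
        _ = 2*Lam*Cu * ∫ z, g δ z := integral_const_mul _ _
        _ ≤ 2*Lam*Cu * (C0 * δ ^ (α-2*s)) :=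
            mul_le_mul_of_nonneg_left (hgval δ hδ) (by positivity)
        _ = 2*C0*Lam*Cu * δ ^ (α-2*s) := by ring
  refine ⟨⟨Lam * (Cu + 2*M) * (C0 * (1:ℝ) ^ (α - 2*s)), hbound⟩, ?_, ?_⟩
  · refine ⟨2*C0*Lam*Cu, ?_⟩
    rintro r ⟨x, y, hxy, rfl⟩
    have hpos : 0 < |x - y| ^ (α - 2*s) :=
      Real.rpow_pos_of_pos (abs_pos.mpr (sub_ne_zero.mpr hxy)) _
    rw [div_le_iff₀ hpos]
    exact hdiff x y
  · rw [show holderSemi (α - 2*s) (LK K u)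
      = sSup {r : ℝ | ∃ x y : ℝ, x ≠ y ∧ r = |LK K u x - LK K u y| / |x - y| ^ (α - 2*s)} from rfl]
    refine csSup_le ⟨|LK K u 0 - LK K u 1| / |(0:ℝ) - 1| ^ (α - 2*s),
      ⟨0, 1, by norm_num, rfl⟩⟩ ?_
    rintro r ⟨x, y, hxy, rfl⟩
    have hpos : 0 < |x - y| ^ (α - 2*s) :=
      Real.rpow_pos_of_pos (abs_pos.mpr (sub_ne_zero.mpr hxy)) _
    rw [div_le_iff₀ hpos]
    calc |LK K u x - LK K u y| ≤ 2*C0*Lam*Cu * |x - y| ^ (α-2*s) := hdiff x y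
      _ = 2*C0 * Lam * Cu * |x - y| ^ (α-2*s) := by ring
end

section
/- Let 0 < B < A be real numbers, let b ≥ 2 and c ≥ 2b, set ζ := ln(ln c / ln b) / ln(A/B), and assume ζ ≥ 32. For x ∈ [b,c] define φ(x) := A(ln b / ln x)^{1/ζ}, which equals B(ln c / ln x)^{1/ζ}. Then x^{A − φ(x)} ≤ e^{2A·ln 2/ζ} for every x ∈ [b, 2b], and x^{φ(x) − B} ≤ e^{2B·ln 2/ζ} for every x ∈ [c/2, c]. -/
open Set Real

set_option maxHeartbeats 2000000 in
theorem phi_power_bounds (A B b c ζ : ℝ) (φ : ℝ → ℝ)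
    (hB : 0 < B) (hBA : B < A) (hb : 2 ≤ b) (hc : 2*b ≤ c)
    (hζ : ζ = Real.log (Real.log c / Real.log b) / Real.log (A/B))
    (hζ32 : 32 ≤ ζ)
    (hφ : ∀ x, φ x = A * (Real.log b / Real.log x) ^ (1/ζ)) :
    (∀ x ∈ Set.Icc b (2*b), x ^ (A - φ x) ≤ Real.exp (2*A*Real.log 2/ζ)) ∧
    (∀ x ∈ Set.Icc (c/2) c, x ^ (φ x - B) ≤ Real.exp (2*B*Real.log 2/ζ)) := by
  have hζpos : (0:ℝ) < ζ := by linarith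
  have hA : (0:ℝ) < A := lt_trans hB hBA
  have hbpos : (1:ℝ) < b := by linarith
  have hlb : 0 < Real.log b := Real.log_pos hbpos
  have hl2 : 0 < Real.log 2 := Real.log_pos (by norm_num)
  have hl2b : Real.log 2 ≤ Real.log b := Real.log_le_log (by norm_num) hb
  have hc4 : (4:ℝ) ≤ c := by linarith
  have hlc : 0 < Real.log c := Real.log_pos (by linarith)
  have hlbc : Real.log b < Real.log c := by
    apply Real.log_lt_log (by linarith); linarith
  -- log(A/B) > 0
  have hAB1 : 1 < A / B := (one_lt_div hB).2 hBA
  have hlAB : 0 < Real.log (A/B) := Real.log_pos hAB1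
  -- key identity: ζ * log(A/B) = log (log c / log b)
  have hkey : ζ * Real.log (A/B) = Real.log (Real.log c / Real.log b) := by
    rw [hζ]; field_simp
  constructor
  · intro x hx
    obtain ⟨hx1, hx2⟩ := hx
    have hxpos : (0:ℝ) < x := by linarith
    have hlx : 0 < Real.log x := Real.log_pos (by linarith)
    have hlbx : Real.log b ≤ Real.log x := Real.log_le_log (by linarith) hx1
    have hlx2 : Real.log x ≤ Real.log 2 + Real.log b := by
      rw [← Real.log_mul (by norm_num) (by linarith)]
      exact Real.log_le_log hxpos hx2
    set s : ℝ := (1/ζ) * Real.log (Real.log x / Real.log b) with hs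
    have hts : 0 ≤ Real.log (Real.log x / Real.log b) :=
      Real.log_nonneg ((one_le_div hlb).2 hlbx)
    have hsnn : 0 ≤ s := mul_nonneg (by positivity) hts
    have hφx : φ x = A * Real.exp (-s) := by
      rw [hφ x, Real.rpow_def_of_pos (by positivity), hs]
      congr 1
      rw [Real.log_div (ne_of_gt hlb) (ne_of_gt hlx),
          Real.log_div (ne_of_gt hlx) (ne_of_gt hlb)]
      ring
    -- A - φ x ≤ A * s
    have h1 : A - φ x ≤ A * s := by
      rw [hφx]
      have : 1 - s ≤ Real.exp (-s) := by
        have := Real.add_one_le_exp (-s); linarith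
      nlinarith
    have hφle : 0 ≤ A - φ x := by
      rw [hφx]
      have : Real.exp (-s) ≤ 1 := Real.exp_le_one_iff.2 (by linarith)
      nlinarith
    -- bound on log(log x / log b)
    have ht : Real.log (Real.log x / Real.log b) ≤ Real.log 2 / Real.log b := by
      have := Real.log_le_sub_one_of_pos (show 0 < Real.log x / Real.log b by positivity)
      have h2 : Real.log x / Real.log b - 1 ≤ Real.log 2 / Real.log b := by
        rw [div_sub_one (ne_of_gt hlb), div_le_div_iff₀ hlb hlb]
        nlinarith
      linarith
    have hmain : (A - φ x) * Real.log x ≤ 2*A*Real.log 2/ζ := by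
      have hsb : s ≤ (1/ζ) * (Real.log 2 / Real.log b) := by
        apply mul_le_mul_of_nonneg_left ht (by positivity)
      have h3 : (A - φ x) * Real.log x ≤ A * s * Real.log x := by
        apply mul_le_mul_of_nonneg_right h1 (le_of_lt hlx)
      have h4 : A * s * Real.log x ≤ A * ((1/ζ) * (Real.log 2 / Real.log b)) * (Real.log 2 + Real.log b) := by
        apply mul_le_mul (mul_le_mul_of_nonneg_left hsb (le_of_lt hA)) hlx2
          (le_of_lt hlx) (by positivity)
      have h5 : A * ((1/ζ) * (Real.log 2 / Real.log b)) * (Real.log 2 + Real.log b)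
          ≤ 2*A*Real.log 2/ζ := by
        have hk : (Real.log 2 / Real.log b) * (Real.log 2 + Real.log b) ≤ 2 * Real.log 2 := by
          rw [div_mul_eq_mul_div, div_le_iff₀ hlb]
          nlinarith
        have h6 : (A/ζ) * ((Real.log 2 / Real.log b) * (Real.log 2 + Real.log b))
            ≤ (A/ζ) * (2 * Real.log 2) :=
          mul_le_mul_of_nonneg_left hk (by positivity)
        calc A * ((1/ζ) * (Real.log 2 / Real.log b)) * (Real.log 2 + Real.log b)
            = (A/ζ) * ((Real.log 2 / Real.log b) * (Real.log 2 + Real.log b)) := by ring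
          _ ≤ (A/ζ) * (2 * Real.log 2) := h6
          _ = 2*A*Real.log 2/ζ := by ring
      linarith
    rw [Real.rpow_def_of_pos hxpos]
    exact Real.exp_le_exp.2 (by linarith [hmain])
  · intro x hx
    obtain ⟨hx1, hx2⟩ := hx
    have hxpos : (0:ℝ) < x := by linarith
    have hx2' : (2:ℝ) ≤ x := by linarith
    have hlx : 0 < Real.log x := Real.log_pos (by linarith)
    have hl2x : Real.log 2 ≤ Real.log x := Real.log_le_log (by norm_num) hx2'
    have hlxc : Real.log x ≤ Real.log c := Real.log_le_log hxpos hx2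
    have hlcx2 : Real.log c ≤ Real.log 2 + Real.log x := by
      rw [← Real.log_mul (by norm_num) (ne_of_gt hxpos)]
      exact Real.log_le_log (show (0:ℝ) < c by linarith) (show c ≤ 2*x by linarith)
    -- rewrite φ in terms of c
    have hcb : (Real.log c / Real.log b) ^ (1/ζ : ℝ) = A / B := by
      rw [Real.rpow_def_of_pos (by positivity)]
      rw [show Real.log (Real.log c / Real.log b) * (1/ζ) = Real.log (A/B) by
        rw [← hkey]; field_simp]
      exact Real.exp_log (by positivity)
    have hφx : φ x = B * (Real.log c / Real.log x) ^ (1/ζ : ℝ) := by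
      rw [hφ x]
      have hdecomp : (Real.log c / Real.log x : ℝ) =
          (Real.log c / Real.log b) * (Real.log b / Real.log x) := by
        field_simp
      rw [hdecomp, Real.mul_rpow (by positivity) (by positivity), hcb]
      field_simp
    set s : ℝ := (1/ζ) * Real.log (Real.log c / Real.log x) with hs
    have hts : 0 ≤ Real.log (Real.log c / Real.log x) :=
      Real.log_nonneg ((one_le_div hlx).2 hlxc)
    have hsnn : 0 ≤ s := mul_nonneg (by positivity) hts
    have hφx2 : φ x = B * Real.exp s := by
      rw [hφx, Real.rpow_def_of_pos (by positivity)]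
      congr 1
      rw [hs]; ring
    -- t := log(log c / log x) ≤ log 2 / log x ≤ 1
    have ht : Real.log (Real.log c / Real.log x) ≤ Real.log 2 / Real.log x := by
      have := Real.log_le_sub_one_of_pos (show 0 < Real.log c / Real.log x by positivity)
      have h2 : Real.log c / Real.log x - 1 ≤ Real.log 2 / Real.log x := by
        rw [div_sub_one (ne_of_gt hlx), div_le_div_iff₀ hlx hlx]
        nlinarith
      linarith
    have ht1 : Real.log (Real.log c / Real.log x) ≤ 1 := by
      have : Real.log 2 / Real.log x ≤ 1 := by
        rw [div_le_one hlx]; linarith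
      linarith
    have hslog2 : s ≤ Real.log 2 := by
      have : s ≤ (1/ζ) * 1 := mul_le_mul_of_nonneg_left ht1 (by positivity)
      have h32 : (1/ζ) * 1 ≤ 1/32 := by
        rw [mul_one, div_le_div_iff₀ hζpos (by norm_num)]; linarith
      have : s ≤ 1/32 := by linarith
      have hlog2 : (0.6931471803 : ℝ) < Real.log 2 := by
        have := Real.log_two_gt_d9; linarith
      linarith
    have hexp2 : Real.exp s ≤ 2 := by
      calc Real.exp s ≤ Real.exp (Real.log 2) := Real.exp_le_exp.2 hslog2
        _ = 2 := Real.exp_log (by norm_num)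
    -- exp s - 1 ≤ s * exp s ≤ 2 s
    have hexps : Real.exp s - 1 ≤ 2 * s := by
      have h1 : 1 - s ≤ Real.exp (-s) := by
        have := Real.add_one_le_exp (-s); linarith
      have h2 : Real.exp (-s) * Real.exp s = 1 := by
        rw [← Real.exp_add]; simp
      nlinarith [Real.exp_pos s]
    have hmain : (φ x - B) * Real.log x ≤ 2*B*Real.log 2/ζ := by
      have h1 : φ x - B ≤ B * (2 * s) := by
        rw [hφx2]; nlinarith
      have h2 : (φ x - B) * Real.log x ≤ B * (2 * s) * Real.log x := by
        apply mul_le_mul_of_nonneg_right h1 (le_of_lt hlx)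
      have h3 : s * Real.log x ≤ Real.log 2 / ζ := by
        have : s * Real.log x ≤ (1/ζ) * (Real.log 2 / Real.log x) * Real.log x := by
          apply mul_le_mul_of_nonneg_right _ (le_of_lt hlx)
          exact mul_le_mul_of_nonneg_left ht (by positivity)
        calc s * Real.log x ≤ (1/ζ) * (Real.log 2 / Real.log x) * Real.log x := this
          _ = Real.log 2 / ζ := by field_simp
      calc (φ x - B) * Real.log x ≤ B * (2 * s) * Real.log x := h2
        _ = 2 * B * (s * Real.log x) := by ring
        _ ≤ 2 * B * (Real.log 2 / ζ) := by
            exact mul_le_mul_of_nonneg_left h3 (by positivity)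
        _ = 2*B*Real.log 2/ζ := by ring
    have hφge : 0 ≤ φ x - B := by
      rw [hφx2]
      nlinarith [Real.one_le_exp hsnn]
    rw [Real.rpow_def_of_pos hxpos]
    exact Real.exp_le_exp.2 (by linarith)
end

section
/- Let B ∈ (0,2). Define 𝔅 := ∫₀¹ t³(1−t)³ dt, η̃(x) := (∫_x^1 t³(1−t)³ dt)/𝔅 for x ∈ [0,1], and w(x) := B·η̃(x) − (x+1)·η̃′(x) for x ∈ [0,1] (so w(x) = (B∫_x^1 t³(1−t)³ dt + (x+1)x³(1−x)³)/𝔅). Let x̄ := (3(4−B) + √(B² − 8B + 88))/(2(7−B)) − 1. Then w(x) ≥ 0 for every x ∈ [0,1], and w(x̄) > w(x) for every x ∈ [0,1] with x ≠ x̄. -/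
open Set Real

private lemma hasDerivAt_P (x : ℝ) :
    HasDerivAt (fun y : ℝ => y^4/4 - 3*y^5/5 + y^6/2 - y^7/7) (x^3*(1-x)^3) x := by
  have h4 : HasDerivAt (fun y : ℝ => y^4) (4*x^3) x := by simpa using hasDerivAt_pow 4 x
  have h5 : HasDerivAt (fun y : ℝ => y^5) (5*x^4) x := by simpa using hasDerivAt_pow 5 x
  have h6 : HasDerivAt (fun y : ℝ => y^6) (6*x^5) x := by simpa using hasDerivAt_pow 6 x
  have h7 : HasDerivAt (fun y : ℝ => y^7) (7*x^6) x := by simpa using hasDerivAt_pow 7 x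
  have h := (((h4.div_const 4).sub ((h5.const_mul 3).div_const 5)).add (h6.div_const 2)).sub
    (h7.div_const 7)
  exact h.congr_deriv (by ring)

private lemma hasDerivAt_g (B x : ℝ) :
    HasDerivAt (fun y : ℝ => B*(1/140 - (y^4/4 - 3*y^5/5 + y^6/2 - y^7/7)) + (y+1)*y^3*(1-y)^3)
      (x^2*(1-x)^2*(3 - (2+B)*x - (7-B)*x^2)) x := by
  have hA : HasDerivAt (fun y : ℝ => B*(1/140 - (y^4/4 - 3*y^5/5 + y^6/2 - y^7/7)))
      (B * (0 - x^3*(1-x)^3)) x :=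
    ((hasDerivAt_const x (1/140 : ℝ)).sub (hasDerivAt_P x)).const_mul B
  have h3 : HasDerivAt (fun y : ℝ => y^3) (3*x^2) x := by simpa using hasDerivAt_pow 3 x
  have hin : HasDerivAt (fun y : ℝ => 1 - y) (-1) x := by
    exact (hasDerivAt_id' x).const_sub (1:ℝ)
  have hcube : HasDerivAt (fun y : ℝ => (1-y)^3) (3*(1-x)^2 * (-1)) x := by
    have := (hasDerivAt_pow 3 (1-x)).comp x hin
    exact this.congr_deriv (by ring)
  have hlin : HasDerivAt (fun y : ℝ => y + 1) (1:ℝ) x := by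
    simpa using (hasDerivAt_id x).add_const (1:ℝ)
  have hC : HasDerivAt (fun y : ℝ => (y+1)*y^3*(1-y)^3)
      ((1 * x^3 + (x+1)*(3*x^2)) * (1-x)^3 + (x+1)*x^3 * (3*(1-x)^2*(-1))) x :=
    ((hlin.mul h3).mul hcube)
  have h := hA.add hC
  exact h.congr_deriv (by ring)

set_option maxHeartbeats 1000000 in
theorem w_nonneg_and_strict_max (B : ℝ) (hB : B ∈ Set.Ioo (0:ℝ) 2)
    (𝔅 xbar : ℝ) (w : ℝ → ℝ)
    (h𝔅 : 𝔅 = ∫ t in (0:ℝ)..1, t^3 * (1-t)^3)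
    -- w(x) = B·η̃(x) − (x+1)·η̃′(x) = (B ∫_x^1 t³(1−t)³ dt + (x+1)x³(1−x)³)/𝔅
    (hw : ∀ x, w x = (B * (∫ t in x..(1:ℝ), t^3 * (1-t)^3) + (x+1) * x^3 * (1-x)^3) / 𝔅)
    (hxbar : xbar = (3*(4-B) + Real.sqrt (B^2 - 8*B + 88)) / (2*(7-B)) - 1) :
    (∀ x ∈ Set.Icc (0:ℝ) 1, 0 ≤ w x) ∧
    (∀ x ∈ Set.Icc (0:ℝ) 1, x ≠ xbar → w x < w xbar) := by
  obtain ⟨hB0, hB2⟩ := hB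
  -- evaluate the integral
  have hP : ∀ x : ℝ, (∫ t in x..(1:ℝ), t^3 * (1-t)^3)
      = 1/140 - (x^4/4 - 3*x^5/5 + x^6/2 - x^7/7) := by
    intro x
    have h := intervalIntegral.integral_eq_sub_of_hasDerivAt
      (f := fun y : ℝ => y^4/4 - 3*y^5/5 + y^6/2 - y^7/7)
      (f' := fun t : ℝ => t^3 * (1-t)^3)
      (a := x) (b := 1)
      (fun t _ => hasDerivAt_P t)
      (Continuous.intervalIntegrable (by continuity) x 1)
    rw [h]
    norm_num
  have h𝔅val : 𝔅 = 1/140 := by rw [h𝔅, hP]; norm_num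
  set g : ℝ → ℝ := fun y : ℝ =>
    B*(1/140 - (y^4/4 - 3*y^5/5 + y^6/2 - y^7/7)) + (y+1)*y^3*(1-y)^3 with hg
  have hwg : ∀ x, w x = 140 * g x := by
    intro x
    rw [hw, hP, h𝔅val, hg]
    ring
  -- the critical point
  set s : ℝ := Real.sqrt (B^2 - 8*B + 88) with hsdef
  have hD : (0:ℝ) ≤ B^2 - 8*B + 88 := by nlinarith
  have hs2 : s^2 = B^2 - 8*B + 88 := Real.sq_sqrt hD
  have hs0 : 0 ≤ s := Real.sqrt_nonneg _
  have h7B : (7:ℝ) - B ≠ 0 := by nlinarith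
  have hxb : xbar = (s - 2 - B) / (2*(7-B)) := by
    rw [hxbar]; field_simp; ring
  have hq : 3 - (2+B)*xbar - (7-B)*xbar^2 = 0 := by
    rw [hxb]; field_simp; nlinarith [hs2]
  have hx0 : 0 < xbar := by
    rw [hxb]
    apply div_pos _ (by nlinarith)
    nlinarith [hs2, hs0]
  have hx1 : xbar < 1 := by
    rw [hxb]
    rw [div_lt_one (by nlinarith)]
    nlinarith [hs2, hs0]
  -- monotonicity
  have hgc : Continuous g := by
    have : Differentiable ℝ g := fun x => (hasDerivAt_g B x).differentiableAt
    exact this.continuous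
  have hderiv : ∀ x : ℝ, deriv g x = x^2*(1-x)^2*(3 - (2+B)*x - (7-B)*x^2) :=
    fun x => (hasDerivAt_g B x).deriv
  have hmono : StrictMonoOn g (Set.Icc 0 xbar) := by
    apply strictMonoOn_of_deriv_pos (convex_Icc _ _) hgc.continuousOn
    intro x hx
    rw [interior_Icc] at hx
    obtain ⟨hxa, hxb'⟩ := hx
    rw [hderiv]
    have h1 : x < 1 := lt_trans hxb' hx1
    have e1 : 0 < xbar - x := by linarith
    have e2 : 0 < (xbar - x)*(xbar + x) := mul_pos e1 (by linarith)
    have hq' : 0 < 3 - (2+B)*x - (7-B)*x^2 := by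
      nlinarith [hq, mul_pos (show (0:ℝ) < 2+B by linarith) e1,
        mul_pos (show (0:ℝ) < 7-B by linarith) e2]
    have hp1 : 0 < x^2 := pow_pos hxa 2
    have hp2 : 0 < (1-x)^2 := pow_pos (by linarith) 2
    exact mul_pos (mul_pos hp1 hp2) hq'
  have hanti : StrictAntiOn g (Set.Icc xbar 1) := by
    apply strictAntiOn_of_deriv_neg (convex_Icc _ _) hgc.continuousOn
    intro x hx
    rw [interior_Icc] at hx
    obtain ⟨hxa, hxb'⟩ := hx
    rw [hderiv]
    have h0 : 0 < x := lt_trans hx0 hxa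
    have e1 : 0 < x - xbar := by linarith
    have e2 : 0 < (x - xbar)*(x + xbar) := mul_pos e1 (by linarith)
    have hq' : 3 - (2+B)*x - (7-B)*x^2 < 0 := by
      nlinarith [hq, mul_pos (show (0:ℝ) < 2+B by linarith) e1,
        mul_pos (show (0:ℝ) < 7-B by linarith) e2]
    have h1 : 0 < x^2 := pow_pos h0 2
    have h2 : 0 < (1-x)^2 := pow_pos (by linarith) 2
    exact mul_neg_of_pos_of_neg (mul_pos h1 h2) hq'
  have hg0 : g 0 = B * (1/140) := by rw [hg]; norm_num
  have hg1 : g 1 = 0 := by rw [hg]; norm_num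
  clear_value g
  constructor
  · intro x hx
    obtain ⟨hxl, hxr⟩ := hx
    rw [hwg]
    rcases le_total x xbar with hle | hle
    · have := hmono.monotoneOn (Set.mem_Icc.mpr ⟨le_refl 0, le_of_lt hx0⟩)
        (Set.mem_Icc.mpr ⟨hxl, hle⟩) hxl
      rw [hg0] at this
      nlinarith
    · have := hanti.antitoneOn (Set.mem_Icc.mpr ⟨hle, hxr⟩)
        (Set.mem_Icc.mpr ⟨le_of_lt hx1, le_refl 1⟩) hxr
      rw [hg1] at this
      nlinarith
  · intro x hx hne
    obtain ⟨hxl, hxr⟩ := hx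
    rw [hwg, hwg]
    rcases lt_or_gt_of_ne hne with hlt | hgt
    · have := hmono (Set.mem_Icc.mpr ⟨hxl, le_of_lt hlt⟩)
        (Set.mem_Icc.mpr ⟨le_of_lt hx0, le_refl xbar⟩) hlt
      linarith
    · have := hanti (Set.mem_Icc.mpr ⟨le_refl xbar, le_of_lt hx1⟩)
        (Set.mem_Icc.mpr ⟨le_of_lt hgt, hxr⟩) hgt
      linarith
end

section
/- Let s ∈ (0,1) and γ ≥ δ ≥ 2, and set B := 2s/(γ−1) ∈ (0,2). Let 𝔅 := ∫₀¹ t³(1−t)³ dt, η̃(x) := (∫_x^1 t³(1−t)³ dt)/𝔅, w₁(x) := B·η̃(x) − (x+1)·η̃′(x) for x ∈ [0,1], and x̄₁ := (3(4−B) + √(B² − 8B + 88))/(2(7−B)) − 1. Define C₂ := 2·max{ 1/B, (1 − B/w₁(x̄₁))^{−1} } and, for any real c > 1, C₁(c) := C₂ − (B·C₂ − ((x̄₁+1)c)^{−B(γ−δ)})/w₁(x̄₁). Then w₁(x̄₁) > B, C₂ > 2, and 2 < C₁(c) < C₂ for every c > 1. -/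
open Set Real

lemma integral_cube_cube (a b : ℝ) :
    ∫ t in a..b, t^3 * (1-t)^3 =
      (b^4/4 - 3*b^5/5 + b^6/2 - b^7/7) - (a^4/4 - 3*a^5/5 + a^6/2 - a^7/7) := by
  have hd : ∀ x ∈ Set.uIcc a b,
      HasDerivAt (fun x : ℝ => x^4/4 - 3*x^5/5 + x^6/2 - x^7/7) (x^3*(1-x)^3) x := by
    intro x _
    have h := ((((hasDerivAt_pow 4 x).div_const 4).sub
      (((hasDerivAt_pow 5 x).const_mul 3).div_const 5)).add
      ((hasDerivAt_pow 6 x).div_const 2)).sub ((hasDerivAt_pow 7 x).div_const 7)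
    exact h.congr_deriv (by norm_num; ring)
  rw [intervalIntegral.integral_eq_sub_of_hasDerivAt hd]
  exact (Continuous.mul (continuous_pow 3)
    (((continuous_const).sub continuous_id).pow 3)).intervalIntegrable a b

set_option maxHeartbeats 2000000 in
theorem constants_C2_C1_bounds (s γ δ : ℝ)
    (hs : s ∈ Set.Ioo (0:ℝ) 1) (hδ : 2 ≤ δ) (hγδ : δ ≤ γ)
    (B 𝔅 xbar C₂ : ℝ) (w₁ C₁ : ℝ → ℝ)
    (hB : B = 2*s/(γ-1))
    (h𝔅 : 𝔅 = ∫ t in (0:ℝ)..1, t^3 * (1-t)^3)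
    -- w₁(x) = B·η̃(x) − (x+1)·η̃′(x) = (B ∫_x^1 t³(1−t)³ dt + (x+1)x³(1−x)³)/𝔅
    (hw : ∀ x, w₁ x = (B * (∫ t in x..(1:ℝ), t^3 * (1-t)^3) + (x+1) * x^3 * (1-x)^3) / 𝔅)
    (hxbar : xbar = (3*(4-B) + Real.sqrt (B^2 - 8*B + 88)) / (2*(7-B)) - 1)
    (hC2 : C₂ = 2 * max (1/B) (1 - B / w₁ xbar)⁻¹)
    (hC1 : ∀ c, C₁ c = C₂ - (B*C₂ - ((xbar+1)*c) ^ (-(B*(γ-δ)))) / w₁ xbar) :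
    B < w₁ xbar ∧ 2 < C₂ ∧ ∀ c : ℝ, 1 < c → 2 < C₁ c ∧ C₁ c < C₂ := by
  obtain ⟨hs0, hs1⟩ := hs
  have hγ1 : (1:ℝ) ≤ γ - 1 := by linarith
  have hB0 : 0 < B := by
    rw [hB]; positivity
  have hB2 : B < 2 := by
    rw [hB, div_lt_iff₀ (by linarith)]
    nlinarith
  -- value of 𝔅
  have h𝔅v : 𝔅 = 1/140 := by rw [h𝔅, integral_cube_cube]; norm_num
  -- bounds on xbar
  have hr0 : (0:ℝ) ≤ Real.sqrt (B^2 - 8*B + 88) := Real.sqrt_nonneg _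
  have hr2 : (Real.sqrt (B^2 - 8*B + 88))^2 = B^2 - 8*B + 88 := by
    rw [Real.sq_sqrt]; nlinarith
  set r := Real.sqrt (B^2 - 8*B + 88) with hrdef
  have hden : (0:ℝ) < 2*(7-B) := by linarith
  have hx_lo : (0.45:ℝ) < xbar := by
    rw [hxbar, lt_sub_iff_add_lt, lt_div_iff₀ hden]
    nlinarith [sq_nonneg (r - (8.3 + 0.1*B))]
  have hx_hi : xbar < 0.55 := by
    rw [hxbar, sub_lt_iff_lt_add, div_lt_iff₀ hden]
    nlinarith [sq_nonneg (r - (9.7 - 0.1*B))]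
  -- w₁ xbar as polynomial
  set x := xbar
  have hwv : w₁ x = B + 140 * (((x+1) * x^3 * (1-x)^3) - B * (x^4/4 - 3*x^5/5 + x^6/2 - x^7/7)) := by
    rw [hw, integral_cube_cube, h𝔅v]
    ring
  -- F(x) ≥ 0 and h(x) > 0 on the interval
  have hF : (0:ℝ) ≤ x^4/4 - 3*x^5/5 + x^6/2 - x^7/7 := by
    have hq : (0:ℝ) ≤ 1/4 - 3*x/5 + x^2/2 - x^3/7 := by nlinarith [sq_nonneg (x - 1/2)]
    have hx4 : (0:ℝ) ≤ x^4 := by positivity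
    nlinarith [mul_nonneg hx4 hq]
  have hh : (0:ℝ) < ((x+1) * x^3 * (1-x)^3) - 2 * (x^4/4 - 3*x^5/5 + x^6/2 - x^7/7) := by
    have hp : (0:ℝ) < 1 - 5*x/2 + 6*x^2/5 + x^3 - 5*x^4/7 := by
      nlinarith [mul_pos (sub_pos.mpr hx_hi) (sub_pos.mpr hx_lo), sq_nonneg (x - 1/2),
        mul_nonneg (mul_pos (sub_pos.mpr hx_hi) (sub_pos.mpr hx_lo)).le (sq_nonneg (x-1/2))]
    have hx3 : (0:ℝ) < x^3 := by positivity
    have heq : ((x+1) * x^3 * (1-x)^3) - 2 * (x^4/4 - 3*x^5/5 + x^6/2 - x^7/7)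
        = x^3 * (1 - 5*x/2 + 6*x^2/5 + x^3 - 5*x^4/7) := by ring
    rw [heq]; exact mul_pos hx3 hp
  have hwB : B < w₁ x := by
    rw [hwv]
    have h7 : (0:ℝ) ≤ (2 - B) * (x^4/4 - 3*x^5/5 + x^6/2 - x^7/7) :=
      mul_nonneg (by linarith) hF
    linarith [h7, hh]
  refine ⟨hwB, ?_, ?_⟩
  · -- 2 < C₂
    have hw0 : 0 < w₁ x := lt_trans hB0 hwB
    have h1 : 0 < 1 - B / w₁ x := by
      rw [sub_pos, div_lt_one hw0]; exact hwB
    have h2 : 1 - B / w₁ x < 1 := by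
      simp only [sub_lt_self_iff]
      positivity
    have h3 : 1 < (1 - B / w₁ x)⁻¹ := (one_lt_inv₀ h1).mpr h2
    rw [hC2]
    have := le_max_right (1/B) (1 - B / w₁ x)⁻¹
    linarith
  · intro c hc
    have hw0 : 0 < w₁ x := lt_trans hB0 hwB
    have h1 : 0 < 1 - B / w₁ x := by
      rw [sub_pos, div_lt_one hw0]; exact hwB
    set P := ((x+1)*c) ^ (-(B*(γ-δ))) with hP
    have hbase : (1:ℝ) < (x+1)*c := by
      have h6 : (x+1)*1 < (x+1)*c := mul_lt_mul_of_pos_left hc (by linarith)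
      linarith
    have hP1 : P ≤ 1 :=
      Real.rpow_le_one_of_one_le_of_nonpos (le_of_lt hbase)
        (neg_nonpos.mpr (mul_nonneg hB0.le (by linarith)))
    have hP0 : 0 < P := Real.rpow_pos_of_pos (by linarith) _
    have hBC2 : 2 ≤ B * C₂ := by
      have := le_max_left (1/B) (1 - B / w₁ x)⁻¹
      rw [hC2]
      calc (2:ℝ) = B * (2 * (1/B)) := by field_simp
        _ ≤ B * (2 * max (1/B) (1 - B / w₁ x)⁻¹) := by
            apply mul_le_mul_of_nonneg_left _ (le_of_lt hB0)
            linarith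
        _ = B * (2 * max (1/B) (1 - B / w₁ x)⁻¹) := rfl
    have hC2ge : 2 * (1 - B / w₁ x)⁻¹ ≤ C₂ := by
      rw [hC2]
      have := le_max_right (1/B) (1 - B / w₁ x)⁻¹
      linarith
    constructor
    · -- 2 < C₁ c
      rw [hC1]
      have key : (B*C₂ - P) / w₁ x < C₂ - 2 := by
        rw [div_lt_iff₀ hw0]
        have h4 : 2 ≤ C₂ * (1 - B / w₁ x) := by
          calc (2:ℝ) = 2 * (1 - B / w₁ x)⁻¹ * (1 - B / w₁ x) := by
                rw [mul_assoc, inv_mul_cancel₀ h1.ne', mul_one]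
            _ ≤ C₂ * (1 - B / w₁ x) := by
                apply mul_le_mul_of_nonneg_right hC2ge (le_of_lt h1)
        have h5 : C₂ * (1 - B / w₁ x) * w₁ x = C₂ * w₁ x - B * C₂ := by
          field_simp
        have h6 : 2 * w₁ x ≤ C₂ * (1 - B / w₁ x) * w₁ x :=
          mul_le_mul_of_nonneg_right h4 hw0.le
        rw [h5] at h6
        linarith [hP0]
      linarith
    · -- C₁ c < C₂
      rw [hC1]
      have : 0 < (B*C₂ - P) / w₁ x := by
        apply div_pos _ hw0
        linarith
      linarith
end
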